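/- arXiv:2509.01284 — 9 statements merged into one kernel-verified Lean document; each statement's English description precedes it below -/
import Mathlib

section
/- Let A be a finite-dimensional central simple K-algebra and L a strictly maximal subfield of A (i.e. [L:K] equals the degree of A). Then every K-subalgebra B of A containing L is a simple algebra. -/
open Module Submodule

section Aux

private lemma aux_sum_eq_one (K A : Type) [Field K] [Ring A] [Algebra K A]
    [IsSimpleRing A] {a : A} (ha : a ≠ 0) :
    ∃ (m : ℕ) (u v : Fin m → A), ∑ k, u k * a * v k = 1 := by
  classical
  set gen : Set A := {z | ∃ u v : A, z = u * a * v} with hgen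
  have hleft : ∀ c : A, ∀ z ∈ span K gen, c * z ∈ span K gen := by
    intro c z hz
    induction hz using Submodule.span_induction with
    | mem w hw =>
      obtain ⟨u, v, rfl⟩ := hw
      exact subset_span ⟨c * u, v, by rw [mul_assoc, mul_assoc, mul_assoc]⟩
    | zero => simp
    | add x y _ _ hx hy => rw [mul_add]; exact add_mem hx hy
    | smul k x _ hx => rw [mul_smul_comm]; exact smul_mem _ _ hx
  have hright : ∀ c : A, ∀ z ∈ span K gen, z * c ∈ span K gen := by
    intro c z hz
    induction hz using Submodule.span_induction with
    | mem w hw =>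
      obtain ⟨u, v, rfl⟩ := hw
      exact subset_span ⟨u, v * c, by rw [mul_assoc, mul_assoc]⟩
    | zero => simp
    | add x y _ _ hx hy => rw [add_mul]; exact add_mem hx hy
    | smul k x _ hx => rw [smul_mul_assoc]; exact smul_mem _ _ hx
  let J : TwoSidedIdeal A := TwoSidedIdeal.mk' (span K gen : Set A)
    (zero_mem _) (fun hx hy => add_mem hx hy) (fun hx => neg_mem hx)
    (fun {x y} hy => hleft x y hy) (fun {x y} hx => hright y x hx)
  have haJ : a ∈ J := by
    rw [TwoSidedIdeal.mem_mk']
    exact subset_span ⟨1, 1, by simp⟩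
  have hJtop : J = ⊤ := by
    rcases eq_bot_or_eq_top J with h | h
    · rw [h, TwoSidedIdeal.mem_bot] at haJ
      exact absurd haJ ha
    · exact h
  have h1 : (1 : A) ∈ span K gen := by
    have : (1 : A) ∈ J := hJtop ▸ TwoSidedIdeal.mem_top A
    rwa [TwoSidedIdeal.mem_mk'] at this
  rw [mem_span_set'] at h1
  obtain ⟨m, f, g, hfg⟩ := h1
  choose u v huv using fun i => (g i).2
  refine ⟨m, fun i => f i • u i, v, ?_⟩
  rw [← hfg]
  refine Finset.sum_congr rfl fun i _ => ?_
  rw [smul_mul_assoc, smul_mul_assoc, ← huv i]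

private lemma aux_indep (K A : Type) [Field K] [Ring A] [Algebra K A]
    [Algebra.IsCentral K A] [IsSimpleRing A]
    {n : ℕ} {lv : Fin n → A} (hlv : LinearIndependent K lv) (s : Finset (Fin n)) :
    ∀ (a : Fin n → A), (∀ i ∉ s, a i = 0) → (∀ x : A, ∑ i, lv i * x * a i = 0) →
      ∀ i, a i = 0 := by
  classical
  induction s using Finset.strongInduction with
  | _ s ih =>
    intro a hsupp hrel
    by_contra hne
    push_neg at hne
    obtain ⟨i₀, hi₀⟩ := hne
    have hi₀s : i₀ ∈ s := by
      by_contra h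
      exact hi₀ (hsupp _ h)
    obtain ⟨m, u, v, huv⟩ := aux_sum_eq_one K A hi₀
    set a' : Fin n → A := fun i => ∑ k, u k * a i * v k with ha'
    have h1 : a' i₀ = 1 := huv
    have hrel' : ∀ x : A, ∑ i, lv i * x * a' i = 0 := by
      intro x
      have key : ∑ k, (∑ i, lv i * (x * u k) * a i) * v k = 0 := by
        simp [hrel]
      calc ∑ i, lv i * x * a' i
          = ∑ i, ∑ k, lv i * x * (u k * a i * v k) := by
            refine Finset.sum_congr rfl fun i _ => ?_
            show lv i * x * (∑ k, u k * a i * v k) = _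
            rw [Finset.mul_sum]
        _ = ∑ k, ∑ i, lv i * (x * u k) * a i * v k := by
            rw [Finset.sum_comm]
            exact Finset.sum_congr rfl fun i _ => Finset.sum_congr rfl fun k _ => by
              simp [mul_assoc]
        _ = ∑ k, (∑ i, lv i * (x * u k) * a i) * v k := by
            exact Finset.sum_congr rfl fun k _ => (Finset.sum_mul _ _ _).symm
        _ = 0 := key
    have hsub : ∀ c : A, ∀ i, a' i * c - c * a' i = 0 := by
      intro c
      refine ih (s.erase i₀) (Finset.erase_ssubset hi₀s) (fun i => a' i * c - c * a' i) ?_ ?_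
      · intro i hi
        by_cases h : i = i₀
        · show a' i * c - c * a' i = 0
          rw [h, h1, one_mul, mul_one, sub_self]
        · have his : i ∉ s := fun hmem => hi (Finset.mem_erase.2 ⟨h, hmem⟩)
          have hz : a' i = 0 := by simp [ha', hsupp i his]
          show a' i * c - c * a' i = 0
          rw [hz, zero_mul, mul_zero, sub_self]
      · intro x
        have e1 := hrel' x
        have e2 := hrel' (x * c)
        calc ∑ i, lv i * x * (a' i * c - c * a' i)
            = (∑ i, lv i * x * a' i) * c - ∑ i, lv i * (x * c) * a' i := by
              rw [Finset.sum_mul, ← Finset.sum_sub_distrib]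
              refine Finset.sum_congr rfl fun i _ => ?_
              simp [mul_sub, mul_assoc]
          _ = 0 := by rw [e1, e2, zero_mul, sub_zero]
    have hcentral : ∀ i, ∃ κ : K, a' i = algebraMap K A κ := by
      intro i
      have hmem : a' i ∈ Subalgebra.center K A := by
        rw [Subalgebra.mem_center_iff]
        intro c
        have := hsub c i
        rw [sub_eq_zero] at this
        exact this.symm
      rw [Algebra.IsCentral.center_eq_bot, Algebra.mem_bot] at hmem
      obtain ⟨κ, hκ⟩ := hmem
      exact ⟨κ, hκ.symm⟩
    choose κ hκ using hcentral
    have hsum : ∑ i, κ i • lv i = 0 := by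
      have h0 := hrel' 1
      rw [← h0]
      refine Finset.sum_congr rfl fun i _ => ?_
      rw [mul_one, hκ i, ← Algebra.commutes (κ i) (lv i), ← Algebra.smul_def]
    have hκ0 := Fintype.linearIndependent_iff.mp hlv κ hsum
    have : a' i₀ = 0 := by rw [hκ i₀, hκ0 i₀, map_zero]
    rw [h1] at this
    exact one_ne_zero this

end Aux

set_option maxHeartbeats 1000000
set_option synthInstance.maxHeartbeats 400000

/-- Let `A` be a finite-dimensional central simple `K`-algebra and `L` a strictly maximal
subfield of `A` (i.e. `[L:K]` equals the degree of `A`, that is `[L:K]^2 = dim_K A`).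
Then every `K`-subalgebra `B` of `A` containing `L` is a simple algebra. -/
theorem stmt1 (K A : Type) [Field K] [Ring A] [Algebra K A]
    [Algebra.IsCentral K A] [IsSimpleRing A] [FiniteDimensional K A]
    (L : Subalgebra K A) (hLfield : IsField L)
    (hdeg : Module.finrank K L * Module.finrank K L = Module.finrank K A)
    (B : Subalgebra K A) (hLB : L ≤ B) :
    IsSimpleRing B := by
  classical
  letI : Field ↥L := hLfield.toField
  haveI : SMulCommClass ↥L ↥L A := ⟨fun l l' x => by
    show (l : A) * ((l' : A) * x) = (l' : A) * ((l : A) * x)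
    rw [← mul_assoc, ← mul_assoc]
    congr 1
    calc (l : A) * (l' : A) = ((l * l' : ↥L) : A) := by norm_cast
      _ = ((l' * l : ↥L) : A) := by rw [mul_comm]
      _ = (l' : A) * (l : A) := by norm_cast⟩
  haveI : NoZeroSMulDivisors ↥L A := ⟨fun {l x} h => by
    rcases eq_or_ne l 0 with rfl | hl
    · exact Or.inl rfl
    · refine Or.inr ?_
      have := congrArg (fun y => l⁻¹ • y) h
      simpa [smul_smul, inv_mul_cancel₀ hl] using this⟩
  haveI : FiniteDimensional ↥L A := Module.Finite.of_restrictScalars_finite K ↥L A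
  set n := Module.finrank K ↥L with hn
  have hnA : Module.finrank K A = n * n := hdeg.symm
  have hn0 : 0 < n := Module.finrank_pos
  have hLA : Module.finrank ↥L A = n := by
    have h := Module.finrank_mul_finrank K ↥L A
    rw [hnA, ← hn] at h
    exact Nat.eq_of_mul_eq_mul_left hn0 h
  haveI : IsScalarTower K ↥L (A →ₗ[↥L] A) := ⟨fun k l f => LinearMap.ext fun x => by
    simp [LinearMap.smul_apply, smul_assoc]⟩
  have hE : Module.finrank K (A →ₗ[↥L] A) = n * (n * n) := by
    have h := Module.finrank_mul_finrank K ↥L (A →ₗ[↥L] A)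
    rw [Module.finrank_linearMap, hLA, ← hn] at h
    exact h.symm
  let bb := Module.finBasis K ↥L
  let lv : Fin n → A := fun i => (bb i : A)
  have hlv : LinearIndependent K lv :=
    bb.linearIndependent.map' L.val.toLinearMap
      (LinearMap.ker_eq_bot.2 Subtype.val_injective)
  let Θ : (Fin n → A) →ₗ[K] (A →ₗ[↥L] A) :=
    { toFun := fun a =>
        { toFun := fun x => ∑ i, lv i * x * a i
          map_add' := fun x y => by
            rw [← Finset.sum_add_distrib]
            exact Finset.sum_congr rfl fun i _ => by rw [mul_add, add_mul]
          map_smul' := fun l x => by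
            simp only [RingHom.id_apply]
            rw [Finset.smul_sum]
            refine Finset.sum_congr rfl fun i _ => ?_
            show lv i * ((l : A) * x) * a i = (l : A) * (lv i * x * a i)
            have hcomm : lv i * (l : A) = (l : A) * lv i := by
              calc lv i * (l : A) = ((bb i * l : ↥L) : A) := by norm_cast
                _ = ((l * bb i : ↥L) : A) := by rw [mul_comm]
                _ = (l : A) * lv i := by norm_cast
            rw [← mul_assoc (lv i) (l : A) x, hcomm, mul_assoc (l : A) (lv i) x,
              mul_assoc (l : A) (lv i * x) (a i)] }
      map_add' := fun a a' => LinearMap.ext fun x => by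
        show ∑ i, lv i * x * (a i + a' i) = (∑ i, lv i * x * a i) + ∑ i, lv i * x * a' i
        rw [← Finset.sum_add_distrib]
        exact Finset.sum_congr rfl fun i _ => by rw [mul_add]
      map_smul' := fun k a => LinearMap.ext fun x => by
        show ∑ i, lv i * x * (k • a i) = k • ∑ i, lv i * x * a i
        rw [Finset.smul_sum]
        exact Finset.sum_congr rfl fun i _ => by rw [mul_smul_comm] }
  have hΘinj : Function.Injective Θ := by
    rw [← LinearMap.ker_eq_bot, eq_bot_iff]
    intro a ha
    have hrel : ∀ x : A, ∑ i, lv i * x * a i = 0 := fun x =>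
      congrFun (congrArg (fun (g : A →ₗ[↥L] A) => (g : A → A)) ha) x
    have := aux_indep K A hlv Finset.univ a (fun i hi => absurd (Finset.mem_univ i) hi) hrel
    exact Submodule.mem_bot _ |>.2 (funext this)
  have hsurj : Function.Surjective Θ := by
    have hr : LinearMap.range Θ = ⊤ := Submodule.eq_top_of_finrank_eq <| by
      rw [LinearMap.finrank_range_of_inj hΘinj, hE, Module.finrank_pi_fintype]
      simp [hnA, Finset.sum_const, mul_comm]
    intro f
    have : f ∈ LinearMap.range Θ := hr ▸ Submodule.mem_top
    exact this
  -- C1 : key simplicity statement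
  have C1 : ∀ W : Submodule K A, (∀ l' ∈ L, ∀ w ∈ W, l' * w ∈ W) →
      (∀ w ∈ W, ∀ c : A, w * c ∈ W) → W ≠ ⊥ → W = ⊤ := by
    intro W hWL hWA hW0
    obtain ⟨w, hwW, hw0⟩ := Submodule.exists_mem_ne_zero_of_ne_bot hW0
    rw [eq_top_iff]
    intro v _
    obtain ⟨q, hq⟩ := Submodule.exists_isCompl (Submodule.span ↥L {w})
    let π := Submodule.linearProjOfIsCompl _ q hq
    let φ := LinearEquiv.toSpanNonzeroSingleton ↥L A w hw0
    let f : A →ₗ[↥L] A :=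
      (LinearMap.toSpanSingleton ↥L A v) ∘ₗ (φ.symm : (↥L ∙ w) →ₗ[↥L] ↥L) ∘ₗ π
    have hfw : f w = v := by
      show LinearMap.toSpanSingleton ↥L A v (φ.symm (π w)) = v
      have h1 : π w = ⟨w, Submodule.mem_span_singleton_self w⟩ :=
        Submodule.linearProjOfIsCompl_apply_left hq ⟨w, Submodule.mem_span_singleton_self w⟩
      rw [h1]
      have h2 : φ.symm ⟨w, Submodule.mem_span_singleton_self w⟩ = 1 := by
        rw [LinearEquiv.symm_apply_eq, LinearEquiv.toSpanNonzeroSingleton_one]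
      rw [h2, LinearMap.toSpanSingleton_apply, one_smul]
    obtain ⟨aa, haa⟩ := hsurj f
    have hv : v = ∑ i, lv i * w * aa i := by rw [← hfw, ← haa]; rfl
    rw [hv]
    exact Submodule.sum_mem _ fun i _ => hWA _ (hWL _ (bb i).2 w hwW) _
  have hbotTop : (⊥ : Submodule K A) ≠ ⊤ := by
    intro h
    have h1 : (1 : A) ∈ (⊥ : Submodule K A) := h ▸ Submodule.mem_top
    exact one_ne_zero ((Submodule.mem_bot K).1 h1)
  have hD1 : ∀ X : Submodule K A, X ≠ ⊥ → (∀ l' ∈ L, ∀ x ∈ X, l' * x ∈ X) →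
      X * (⊤ : Submodule K A) = ⊤ := by
    intro X hX0 hXL
    refine C1 _ ?_ ?_ ?_
    · intro l' hl' w hw
      refine Submodule.mul_induction_on hw (fun x hx c hc => ?_) (fun u v hu hv => ?_)
      · rw [← mul_assoc]
        exact Submodule.mul_mem_mul (hXL l' hl' x hx) hc
      · rw [mul_add]; exact add_mem hu hv
    · intro w hw c
      refine Submodule.mul_induction_on hw (fun x hx c' _ => ?_) (fun u v hu hv => ?_)
      · rw [mul_assoc]
        exact Submodule.mul_mem_mul hx Submodule.mem_top
      · rw [add_mul]; exact add_mem hu hv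
    · intro h
      refine hX0 (le_bot_iff.1 ?_)
      rw [← h]
      intro x hx
      simpa using Submodule.mul_mem_mul hx (Submodule.mem_top (x := (1 : A)))
  have hD2 : ∀ X : Submodule K A, X ≠ ⊥ → (∀ l' ∈ L, ∀ x ∈ X, l' * x ∈ X) →
      X * X ≠ ⊥ := by
    intro X hX0 hXL h
    have h1 := hD1 X hX0 hXL
    have h2 : X * X * (⊤ : Submodule K A) = ⊤ := by
      rw [mul_assoc, h1, h1]
    rw [h, bot_mul] at h2
    exact hbotTop h2
  have hIdem : ∀ N : Submodule K A, (∀ x ∈ N, x ∈ B) →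
      (∀ x ∈ N, ∀ c ∈ B, x * c ∈ N) → N ≠ ⊥ →
      ∃ e, e ∈ N ∧ e ≠ 0 ∧ e * e = e := by
    intro N hNB hNr hN0
    set S : Set (Submodule K A) :=
      {m | m ≠ ⊥ ∧ m ≤ N ∧ ∀ x ∈ m, ∀ c ∈ B, x * c ∈ m} with hS
    have hNS : N ∈ S := ⟨hN0, le_rfl, hNr⟩
    obtain ⟨ℓ, hℓS, hℓmin⟩ : ∃ ℓ ∈ S, ∀ m ∈ S,
        Module.finrank K ℓ ≤ Module.finrank K m := by
      have hne : ((fun m : Submodule K A => Module.finrank K m) '' S).Nonempty :=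
        ⟨_, ⟨N, hNS, rfl⟩⟩
      obtain ⟨m, hmS, hmr⟩ := Nat.sInf_mem hne
      exact ⟨m, hmS, fun m' hm' => hmr.le.trans (Nat.sInf_le ⟨m', hm', rfl⟩)⟩
    obtain ⟨hℓ0, hℓN, hℓr⟩ := hℓS
    have hmin : ∀ m, m ∈ S → m ≤ ℓ → m = ℓ := by
      intro m hm hle
      rcases lt_or_eq_of_le hle with hlt | heq
      · exact absurd (hℓmin m hm) (not_le.2 (Submodule.finrank_lt_finrank_of_lt hlt))
      · exact heq
    have hℓB : ∀ x ∈ ℓ, x ∈ B := fun x hx => hNB x (hℓN hx)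
    have hll : ∃ x ∈ ℓ, ∃ y ∈ ℓ, x * y ≠ 0 := by
      by_contra hc
      push_neg at hc
      have hllbot : ℓ * ℓ = ⊥ := by
        rw [eq_bot_iff]
        exact Submodule.mul_le.2 fun x hx y hy =>
          (Submodule.mem_bot K).2 (hc x hx y hy)
      have h1 : ℓ ≤ (Subalgebra.toSubmodule B) * ℓ := by
        intro x hx
        simpa using Submodule.mul_mem_mul
          (show (1 : A) ∈ Subalgebra.toSubmodule B from B.one_mem) hx
      have hBSl0 : (Subalgebra.toSubmodule B) * ℓ ≠ ⊥ :=
        fun h => hℓ0 (le_bot_iff.1 (h ▸ h1))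
      have hBSlL : ∀ l' ∈ L, ∀ y ∈ (Subalgebra.toSubmodule B) * ℓ,
          l' * y ∈ (Subalgebra.toSubmodule B) * ℓ := by
        intro l' hl' y hy
        refine Submodule.mul_induction_on hy (fun c hc x hx => ?_) (fun u v hu hv => ?_)
        · rw [← mul_assoc]
          exact Submodule.mul_mem_mul (B.mul_mem (hLB hl') hc) hx
        · rw [mul_add]; exact add_mem hu hv
      have h2 := hD2 _ hBSl0 hBSlL
      have h3 : ((Subalgebra.toSubmodule B) * ℓ) * ((Subalgebra.toSubmodule B) * ℓ) ≤
          (Subalgebra.toSubmodule B) * (ℓ * ℓ) := by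
        refine Submodule.mul_le.2 fun y hy z hz => ?_
        refine Submodule.mul_induction_on hy (fun c hc x hx => ?_) (fun u v hu hv => ?_)
        · refine Submodule.mul_induction_on hz (fun c' hc' x' hx' => ?_) (fun u v hu hv => ?_)
          · have hxc' : x * c' ∈ ℓ := hℓr x hx c' hc'
            have hm : c * ((x * c') * x') ∈ (Subalgebra.toSubmodule B) * (ℓ * ℓ) :=
              Submodule.mul_mem_mul hc (Submodule.mul_mem_mul hxc' hx')
            have heq : c * x * (c' * x') = c * ((x * c') * x') := by
              simp [mul_assoc]
            rwa [heq]
          · rw [mul_add]; exact add_mem hu hv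
        · rw [add_mul]; exact add_mem hu hv
      rw [hllbot, Submodule.mul_bot] at h3
      exact h2 (le_bot_iff.1 h3)
    obtain ⟨x, hx, y, hy, hxy⟩ := hll
    have hℓ'ℓ : Submodule.map (LinearMap.mulLeft K x) ℓ ≤ ℓ := by
      rintro _ ⟨z, hz, rfl⟩
      exact hℓr x hx z (hℓB z hz)
    have hℓ'S : Submodule.map (LinearMap.mulLeft K x) ℓ ∈ S := by
      refine ⟨?_, le_trans hℓ'ℓ hℓN, ?_⟩
      · intro h
        apply hxy
        have hm : LinearMap.mulLeft K x y ∈ Submodule.map (LinearMap.mulLeft K x) ℓ :=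
          Submodule.mem_map_of_mem hy
        rw [h] at hm
        simpa using hm
      · rintro _ ⟨z, hz, rfl⟩ c hc
        refine ⟨z * c, hℓr z hz c hc, ?_⟩
        show x * (z * c) = x * z * c
        rw [mul_assoc]
    have hℓ'eq : Submodule.map (LinearMap.mulLeft K x) ℓ = ℓ := hmin _ hℓ'S hℓ'ℓ
    have hxmem : x ∈ Submodule.map (LinearMap.mulLeft K x) ℓ := hℓ'eq.symm ▸ hx
    obtain ⟨e, he, hex⟩ := hxmem
    have hxe : x * e = x := hex
    have hx0 : x ≠ 0 := fun h => hxy (by rw [h, zero_mul])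
    have he0 : e ≠ 0 := fun h => hx0 (by rw [← hxe, h, mul_zero])
    have hN'bot : ℓ ⊓ LinearMap.ker (LinearMap.mulLeft K x) = ⊥ := by
      by_contra hN'0
      have hN'S : ℓ ⊓ LinearMap.ker (LinearMap.mulLeft K x) ∈ S := by
        refine ⟨hN'0, le_trans inf_le_left hℓN, ?_⟩
        intro z hz c hc
        obtain ⟨hz1, hz2⟩ := Submodule.mem_inf.1 hz
        refine Submodule.mem_inf.2 ⟨hℓr z hz1 c hc, ?_⟩
        rw [LinearMap.mem_ker] at hz2 ⊢
        rw [LinearMap.mulLeft_apply] at hz2 ⊢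
        rw [← mul_assoc, hz2, zero_mul]
      have heqq := hmin _ hN'S inf_le_left
      have heN' : e ∈ ℓ ⊓ LinearMap.ker (LinearMap.mulLeft K x) := by
        rw [heqq]; exact he
      have : x * e = 0 := by
        have h2 := (Submodule.mem_inf.1 heN').2
        rwa [LinearMap.mem_ker, LinearMap.mulLeft_apply] at h2
      rw [hxe] at this
      exact hx0 this
    have hidem : e * e = e := by
      have hmem : e * e - e ∈ ℓ ⊓ LinearMap.ker (LinearMap.mulLeft K x) := by
        refine Submodule.mem_inf.2 ⟨sub_mem (hℓr e he e (hℓB e he)) he, ?_⟩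
        rw [LinearMap.mem_ker, LinearMap.mulLeft_apply, mul_sub, ← mul_assoc, hxe, hxe, sub_self]
      rw [hN'bot] at hmem
      have := (Submodule.mem_bot K).1 hmem
      rwa [sub_eq_zero] at this
    exact ⟨e, hℓN he, he0, hidem⟩
  -- now the conclusion
  haveI : Nontrivial ↥B := ⟨1, 0, fun h => one_ne_zero (α := A) (by
    have := congrArg (Subtype.val) h
    simpa using this)⟩
  refine ⟨{ toNontrivial := ⟨⊥, ⊤, fun hbt => ?_⟩, eq_bot_or_eq_top := fun I => ?_ }⟩
  · have h1 : (1 : ↥B) ∈ (⊥ : TwoSidedIdeal ↥B) := hbt ▸ TwoSidedIdeal.mem_top ↥B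
    exact one_ne_zero ((TwoSidedIdeal.mem_bot ↥B).1 h1)
  · rcases eq_or_ne I ⊥ with h | h
    · exact Or.inl h
    refine Or.inr ?_
    set X : Submodule K A :=
      Submodule.map B.val.toLinearMap
        (Submodule.restrictScalars K (TwoSidedIdeal.asIdeal I)) with hXdef
    have hmemX : ∀ z : A, z ∈ X ↔ ∃ y : ↥B, y ∈ I ∧ (y : A) = z := by
      intro z
      rw [hXdef, Submodule.mem_map]
      constructor
      · rintro ⟨y, hy, rfl⟩
        exact ⟨y, TwoSidedIdeal.mem_asIdeal.1 ((Submodule.restrictScalars_mem _ _ _).1 hy), rfl⟩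
      · rintro ⟨y, hy, rfl⟩
        exact ⟨y, (Submodule.restrictScalars_mem _ _ _).2 (TwoSidedIdeal.mem_asIdeal.2 hy), rfl⟩
    have hXB : ∀ x ∈ X, x ∈ B := by
      intro x hx
      obtain ⟨y, _, rfl⟩ := (hmemX _).1 hx
      exact y.2
    have hBX : ∀ c ∈ B, ∀ x ∈ X, c * x ∈ X := by
      intro c hc x hx
      obtain ⟨y, hyI, rfl⟩ := (hmemX _).1 hx
      exact (hmemX _).2 ⟨⟨c, hc⟩ * y, I.mul_mem_left _ _ hyI, rfl⟩
    have hXBr : ∀ x ∈ X, ∀ c ∈ B, x * c ∈ X := by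
      intro x hx c hc
      obtain ⟨y, hyI, rfl⟩ := (hmemX _).1 hx
      exact (hmemX _).2 ⟨y * ⟨c, hc⟩, I.mul_mem_right _ _ hyI, rfl⟩
    have hX0 : X ≠ ⊥ := by
      intro hbot
      apply h
      refine SetLike.ext fun y => ?_
      simp only [TwoSidedIdeal.mem_bot]
      constructor
      · intro hy
        have hm : (y : A) ∈ X := (hmemX _).2 ⟨y, hy, rfl⟩
        rw [hbot] at hm
        exact Subtype.ext ((Submodule.mem_bot K).1 hm)
      · rintro rfl
        exact I.zero_mem
    have key : ∃ e ∈ X, ∀ x ∈ X, e * x = x := by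
      suffices hkey : ∀ d : ℕ, ∀ e, e ∈ X → e * e = e →
          Module.finrank K ↥(X ⊓ LinearMap.ker (LinearMap.mulLeft K e)) = d →
          ∃ e' ∈ X, ∀ x ∈ X, e' * x = x by
        exact hkey _ 0 (zero_mem X) (by rw [mul_zero]) rfl
      intro d
      induction d using Nat.strong_induction_on with
      | _ d ih =>
        intro e heX hee hrk
        by_cases hN : X ⊓ LinearMap.ker (LinearMap.mulLeft K e) = ⊥
        · refine ⟨e, heX, fun x hx => ?_⟩
          have hmem : x - e * x ∈ X ⊓ LinearMap.ker (LinearMap.mulLeft K e) := by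
            refine Submodule.mem_inf.2 ⟨sub_mem hx (hBX e (hXB e heX) x hx), ?_⟩
            rw [LinearMap.mem_ker, LinearMap.mulLeft_apply, mul_sub, ← mul_assoc, hee, sub_self]
          rw [hN] at hmem
          have := (Submodule.mem_bot K).1 hmem
          rw [sub_eq_zero] at this
          exact this.symm
        · obtain ⟨e₁, he₁N, he₁0, he₁idem⟩ :=
            hIdem (X ⊓ LinearMap.ker (LinearMap.mulLeft K e))
              (fun x hx => hXB x (Submodule.mem_inf.1 hx).1)
              (fun x hx c hc => by
                obtain ⟨hx1, hx2⟩ := Submodule.mem_inf.1 hx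
                refine Submodule.mem_inf.2 ⟨hXBr x hx1 c hc, ?_⟩
                rw [LinearMap.mem_ker, LinearMap.mulLeft_apply] at hx2 ⊢
                rw [← mul_assoc, hx2, zero_mul])
              hN
          obtain ⟨he₁X, he₁ker⟩ := Submodule.mem_inf.1 he₁N
          have hee₁ : e * e₁ = 0 := by
            rwa [LinearMap.mem_ker, LinearMap.mulLeft_apply] at he₁ker
          have he'X : e + e₁ - e₁ * e ∈ X :=
            sub_mem (add_mem heX he₁X) (hXBr e₁ he₁X e (hXB e heX))
          have he'e : (e + e₁ - e₁ * e) * e = e + e₁ * e - e₁ * e := by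
            rw [sub_mul, add_mul, hee, mul_assoc, hee]
          have he'e' : (e + e₁ - e₁ * e) * e = e := by
            rw [he'e, add_sub_cancel_right]
          have he'e₁ : (e + e₁ - e₁ * e) * e₁ = e₁ := by
            rw [sub_mul, add_mul, hee₁, he₁idem, zero_add, mul_assoc, hee₁, mul_zero, sub_zero]
          have hee' : e * (e + e₁ - e₁ * e) = e := by
            rw [mul_sub, mul_add, hee, hee₁, add_zero, ← mul_assoc, hee₁, zero_mul, sub_zero]
          have he'idem : (e + e₁ - e₁ * e) * (e + e₁ - e₁ * e) = e + e₁ - e₁ * e := by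
            rw [mul_sub, mul_add, he'e', he'e₁, ← mul_assoc, he'e₁]
          have hlt : X ⊓ LinearMap.ker (LinearMap.mulLeft K (e + e₁ - e₁ * e)) <
              X ⊓ LinearMap.ker (LinearMap.mulLeft K e) := by
            refine lt_of_le_of_ne ?_ ?_
            · intro z hz
              obtain ⟨hz1, hz2⟩ := Submodule.mem_inf.1 hz
              rw [LinearMap.mem_ker, LinearMap.mulLeft_apply] at hz2
              refine Submodule.mem_inf.2 ⟨hz1, ?_⟩
              rw [LinearMap.mem_ker, LinearMap.mulLeft_apply]
              calc e * z = (e * (e + e₁ - e₁ * e)) * z := by rw [hee']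
                _ = e * ((e + e₁ - e₁ * e) * z) := by rw [mul_assoc]
                _ = 0 := by rw [hz2, mul_zero]
            · intro heq
              have hm : e₁ ∈ X ⊓ LinearMap.ker (LinearMap.mulLeft K (e + e₁ - e₁ * e)) :=
                heq.symm ▸ he₁N
              have h2 := (Submodule.mem_inf.1 hm).2
              rw [LinearMap.mem_ker, LinearMap.mulLeft_apply, he'e₁] at h2
              exact he₁0 h2
          exact ih _ (hrk ▸ Submodule.finrank_lt_finrank_of_lt hlt) _ he'X he'idem rfl
    obtain ⟨e, heX, he⟩ := key
    have h1top : X * (⊤ : Submodule K A) = ⊤ :=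
      hD1 X hX0 (fun l' hl' => hBX l' (hLB hl'))
    have hey : ∀ y ∈ X * (⊤ : Submodule K A), e * y = y := by
      intro y hy
      refine Submodule.mul_induction_on hy (fun x hx c _ => ?_) (fun u v hu hv => ?_)
      · rw [← mul_assoc, he x hx]
      · rw [mul_add, hu, hv]
    have he1 : e = 1 := by
      have := hey 1 (by rw [h1top]; exact Submodule.mem_top)
      rwa [mul_one] at this
    have h1X : (1 : A) ∈ X := he1 ▸ heX
    obtain ⟨y, hyI, hy1⟩ := (hmemX _).1 h1X
    have hy : y = 1 := Subtype.ext (by simpa using hy1)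
    exact I.eq_top (hy ▸ hyI)
end

section
/- For a finite field extension L/K, every K-subalgebra of End_K(L) containing (the image of) L is of the form End_M(L) for a unique intermediate field K ⊆ M ⊆ L, namely M = C_{End_K(L)}(B); moreover C_{End_K(L)}(M) = End_M(L) for every intermediate field M. -/
/-!
Since `B` contains the multiplications by elements of `L`, the field `L` is a simple `B`-module,
and a `B`-linear endomorphism of `L`, commuting with all multiplications, is itself the
multiplication by some element, which then lies in `M = C_E(B) ∩ L`. Hence every `M`-linear map
commutes with `End_B(L)`, and the Jacobson density theorem makes it agree with an element of `B`
on a `K`-basis of `L`. Likewise `C_E(B)` commutes with all multiplications, so `C_E(B) = M`.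
-/

open Module (End)

section
variable {K L : Type*} [Field K] [Field L] [Algebra K L]

theorem commute_lmul_iff {f : End K L} {m : L} :
    Commute f (Algebra.lmul K L m) ↔ ∀ x, f (m * x) = m * f x := by
  simp only [Commute, SemiconjBy, LinearMap.ext_iff, Module.End.mul_apply,
    Algebra.coe_lmul_eq_mul, LinearMap.mul_apply']

theorem eq_lmul_of_commute_lmul {f : End K L} (hf : ∀ m, Commute f (Algebra.lmul K L m)) :
    f = Algebra.lmul K L (f 1) := by
  ext x
  simpa [mul_comm] using commute_lmul_iff.mp (hf x) 1

theorem lmul_mem_centralizer_iff {S : Set (End K L)} {m : L} :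
    Algebra.lmul K L m ∈ Subalgebra.centralizer K S ↔
      ∀ f ∈ S, ∀ x, f (m * x) = m * f x := by
  simp only [Subalgebra.mem_centralizer_iff, ← commute_lmul_iff]
  rfl

theorem centralizer_image_lmul (M : IntermediateField K L) :
    (Subalgebra.centralizer K (Algebra.lmul K L '' M) : Set (End K L)) =
      {f | ∀ m ∈ M, ∀ x, f (m * x) = m * f x} := by
  ext f
  simp only [SetLike.mem_coe, Subalgebra.mem_centralizer_iff, Set.forall_mem_image,
    Set.mem_ofPred_eq, ← commute_lmul_iff]
  exact forall₂_congr fun _ _ => eq_comm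

def centralizerField (B : Subalgebra K (End K L)) : IntermediateField K L :=
  ((Subalgebra.centralizer K (B : Set (End K L))).comap (Algebra.lmul K L)).toIntermediateField
    fun m hm => by
      rw [Subalgebra.mem_comap, lmul_mem_centralizer_iff] at hm ⊢
      intro f hf x
      rcases eq_or_ne m 0 with rfl | hm0
      · simp
      · rw [eq_inv_mul_iff_mul_eq₀ hm0, ← hm f hf, mul_inv_cancel_left₀ hm0]

variable {B : Subalgebra K (End K L)}

theorem mem_centralizerField_iff {m : L} :
    m ∈ centralizerField B ↔ ∀ f ∈ B, ∀ x, f (m * x) = m * f x :=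
  lmul_mem_centralizer_iff

theorem image_lmul_centralizerField (hB : (Algebra.lmul K L).range ≤ B) :
    Algebra.lmul K L '' centralizerField B = Subalgebra.centralizer K (B : Set (End K L)) := by
  refine subset_antisymm (Set.image_subset_iff.mpr fun m hm => hm) fun g hg => ?_
  have hg1 : g = Algebra.lmul K L (g 1) :=
    eq_lmul_of_commute_lmul fun m => (hg _ (hB ⟨m, rfl⟩)).symm
  exact ⟨g 1, show _ ∈ Subalgebra.centralizer K _ from hg1 ▸ hg, hg1.symm⟩

theorem isSimpleModule_of_range_lmul_le (hB : (Algebra.lmul K L).range ≤ B) :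
    IsSimpleModule B L := by
  refine isSimpleModule_iff_toSpanSingleton_surjective.mpr ⟨inferInstance, fun v hv w => ?_⟩
  refine ⟨⟨Algebra.lmul K L (w * v⁻¹), hB ⟨_, rfl⟩⟩, ?_⟩
  simp [Subalgebra.smul_def, hv]

theorem linearMap_apply_eq_mul (hB : (Algebra.lmul K L).range ≤ B) (φ : End B L) (x : L) :
    φ x = φ 1 * x := by
  simpa [Subalgebra.smul_def, mul_comm] using φ.map_smul ⟨Algebra.lmul K L x, hB ⟨x, rfl⟩⟩ 1

theorem linearMap_apply_one_mem_centralizerField (hB : (Algebra.lmul K L).range ≤ B)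
    (φ : End B L) : φ 1 ∈ centralizerField B :=
  mem_centralizerField_iff.mpr fun f hf x => by
    rw [← linearMap_apply_eq_mul hB, ← linearMap_apply_eq_mul hB]
    exact (φ.map_smul ⟨f, hf⟩ x).symm

theorem mem_of_forall_map_mul [FiniteDimensional K L] (hB : (Algebra.lmul K L).range ≤ B)
    {f : End K L} (hf : ∀ m ∈ centralizerField B, ∀ x, f (m * x) = m * f x) : f ∈ B := by
  classical
  have := isSimpleModule_of_range_lmul_le hB
  let F : End (End B L) L :=
    { toFun := f
      map_add' := f.map_add
      map_smul' := fun φ x => by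
        change f (φ x) = φ (f x)
        rw [linearMap_apply_eq_mul hB φ x, linearMap_apply_eq_mul hB φ (f x)]
        exact hf _ (linearMap_apply_one_mem_centralizerField hB φ) x }
  let b := Module.finBasis K L
  obtain ⟨r, hr⟩ := jacobson_density (R := B) F (Finset.univ.image b)
  have hfr : f = r := b.ext fun i => hr _ (Finset.mem_image_of_mem _ (Finset.mem_univ i))
  exact hfr ▸ r.2

theorem coe_eq_setOf_centralizerField [FiniteDimensional K L]
    (hB : (Algebra.lmul K L).range ≤ B) :
    (B : Set (End K L)) = {f | ∀ m ∈ centralizerField B, ∀ x, f (m * x) = m * f x} :=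
  Set.Subset.antisymm (fun f hf _ hm x => mem_centralizerField_iff.mp hm f hf x)
    fun _ hf => mem_of_forall_map_mul hB hf

end

/-- For a finite field extension `L/K`, every `K`-subalgebra of `E = End_K(L)` containing the
image of `L` is `End_M(L)` for a unique intermediate field `M`, namely `M = C_E(B)`; moreover
`C_E(M) = End_M(L)` for every intermediate field `M`. -/
theorem stmt4 (K L : Type) [Field K] [Field L] [Algebra K L] [FiniteDimensional K L] :
    (∀ M : IntermediateField K L,
        ((Subalgebra.centralizer K ((Algebra.lmul K L) '' (M : Set L)) :
            Subalgebra K (Module.End K L)) : Set (Module.End K L)) =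
          {f : Module.End K L | ∀ m ∈ M, ∀ x : L, f (m * x) = m * f x}) ∧
    (∀ B : Subalgebra K (Module.End K L), (Algebra.lmul K L).range ≤ B →
        ∃! M : IntermediateField K L,
          (B : Set (Module.End K L)) =
              {f : Module.End K L | ∀ m ∈ M, ∀ x : L, f (m * x) = m * f x} ∧
          (Algebra.lmul K L) '' (M : Set L) =
            (Subalgebra.centralizer K (B : Set (Module.End K L)) :
              Subalgebra K (Module.End K L))) := by
  refine ⟨centralizer_image_lmul, fun B hB => ?_⟩
  refine ⟨centralizerField B,
    ⟨coe_eq_setOf_centralizerField hB, image_lmul_centralizerField hB⟩, ?_⟩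
  rintro M ⟨-, hM⟩
  exact SetLike.coe_injective <| Set.image_injective.mpr Algebra.lmul_injective <|
    hM.trans (image_lmul_centralizerField hB).symm
end

section
/- Let L/K be a finite field extension with automorphism group G and fixed field L^G. Then the subalgebra of End_K(L) generated by L and G equals End_{L^G}(L), and it is a central simple L^G-algebra of degree [L : L^G] = |G|. -/
/-!
Every generator of the algebra `A` generated by `L` and `G` commutes with multiplication by
elements of `L^G`, so `A ⊆ End_{L^G}(L)`. Conversely, `End_{L^G}(L)` has `L`-dimension
`[L : L^G] = |G|` (Artin), while by Dedekind's independence of characters the elements of `G`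
span an `L`-subspace of `A` of the same dimension; hence `A = End_{L^G}(L)`, a matrix algebra
over `L^G` and thus simple. An endomorphism `f` commuting with all multiplications `x ↦ c x` is
itself multiplication by `c = f 1`, and it commutes with `G` exactly when `c ∈ L^G`.
-/

open Module IntermediateField

namespace Module.End

variable (K F M : Type*) [CommSemiring K] [CommSemiring F] [Algebra K F] [AddCommMonoid M]
  [Module K M] [Module F M] [IsScalarTower K F M]

def restrictScalarsAlgHom : Module.End F M →ₐ[K] Module.End K M where
  toFun f := f.restrictScalars K
  map_one' := rfl
  map_mul' _ _ := rfl
  map_zero' := rfl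
  map_add' _ _ := rfl
  commutes' r := by ext; simp

theorem restrictScalarsAlgHom_injective :
    Function.Injective (restrictScalarsAlgHom K F M) :=
  LinearMap.restrictScalars_injective K

instance isSimpleRing (F V : Type*) [Field F] [AddCommGroup V] [Module F V]
    [FiniteDimensional F V] [Nontrivial V] : IsSimpleRing (Module.End F V) :=
  have : Nonempty (Fin (finrank F V)) := ⟨⟨0, finrank_pos⟩⟩
  .of_ringEquiv (algEquivMatrix (finBasis F V)).symm.toRingEquiv inferInstance

end Module.End

namespace Algebra

variable {R A : Type*} [CommSemiring R]

theorem mem_centralizer_lmul_iff [Semiring A] [Algebra R A] {S : Set A} {f : Module.End R A} :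
    f ∈ Subalgebra.centralizer R (lmul R A '' S) ↔ ∀ m ∈ S, ∀ x, f (m * x) = m * f x := by
  simp only [Subalgebra.mem_centralizer_iff, Set.forall_mem_image, LinearMap.ext_iff,
    Module.End.mul_apply, coe_lmul_eq_mul, LinearMap.mul_apply']
  exact forall₂_congr fun _ _ => forall_congr' fun _ => eq_comm

theorem eq_lmul_apply_one_of_commute [CommSemiring A] [Algebra R A] {f : Module.End R A}
    (hf : ∀ c, f * lmul R A c = lmul R A c * f) : f = lmul R A (f 1) := by
  ext x
  simpa [mul_comm x] using LinearMap.congr_fun (hf x) 1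

end Algebra

section

variable (K L : Type*) [Field K] [Field L] [Algebra K L]

abbrev adjoinLmulAut : Subalgebra K (Module.End K L) :=
  Algebra.adjoin K (Set.range (Algebra.lmul K L) ∪
    Set.range fun g : L ≃ₐ[K] L => (g.toLinearMap : Module.End K L))

theorem linearIndependent_algEquiv_toLinearMap :
    LinearIndependent L fun g : L ≃ₐ[K] L => (g.toLinearMap : Module.End K L) :=
  (linearIndependent_toLinearMap K L L).comp (fun g : L ≃ₐ[K] L => (g : L →ₐ[K] L))
    AlgEquiv.coe_toAlgHom_injective

theorem finrank_span_algEquiv_toLinearMap [FiniteDimensional K L] :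
    finrank L (Submodule.span L
      (Set.range fun g : L ≃ₐ[K] L => (g.toLinearMap : Module.End K L))) =
      Nat.card (L ≃ₐ[K] L) := by
  rw [Nat.card_eq_fintype_card]
  exact finrank_span_eq_card (linearIndependent_algEquiv_toLinearMap K L)

theorem finrank_fixedField_top_eq_card [FiniteDimensional K L] :
    finrank (fixedField (⊤ : Subgroup (L ≃ₐ[K] L))) L = Nat.card (L ≃ₐ[K] L) := by
  rw [finrank_fixedField_eq_card]
  exact Nat.card_congr Subgroup.topEquiv.toEquiv

variable {K L}

theorem mem_range_restrictScalarsAlgHom_iff {F : IntermediateField K L}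
    {f : Module.End K L} :
    f ∈ (Module.End.restrictScalarsAlgHom K F L).range ↔
      ∀ m ∈ F, ∀ x, f (m * x) = m * f x := by
  refine ⟨?_, fun h => ⟨{ f with map_smul' := fun m x => h m m.2 x }, rfl⟩⟩
  rintro ⟨f, rfl⟩ m hm x
  exact f.map_smul ⟨m, hm⟩ x

theorem adjoinLmulAut_le_centralizer :
    adjoinLmulAut K L ≤ Subalgebra.centralizer K
      (Algebra.lmul K L '' (fixedField (⊤ : Subgroup (L ≃ₐ[K] L)))) := by
  refine Algebra.adjoin_le ?_
  rintro _ (⟨c, rfl⟩ | ⟨g, rfl⟩) <;>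
    refine Algebra.mem_centralizer_lmul_iff.2 fun m hm x => ?_
  · simp [mul_left_comm]
  · simp [(mem_fixedField_iff _ m).1 hm g]

theorem commute_adjoinLmulAut_iff (f : Module.End K L) :
    (∀ h ∈ adjoinLmulAut K L, f * h = h * f) ↔
      ∃ m ∈ fixedField (⊤ : Subgroup (L ≃ₐ[K] L)), f = Algebra.lmul K L m := by
  constructor
  · intro hf
    have hlmul := Algebra.eq_lmul_apply_one_of_commute fun c =>
      hf _ (Algebra.subset_adjoin (.inl ⟨c, rfl⟩))
    refine ⟨f 1, (mem_fixedField_iff _ _).2 fun g _ => ?_, hlmul⟩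
    simpa using (LinearMap.congr_fun (hf _ (Algebra.subset_adjoin (.inr ⟨g, rfl⟩))) 1).symm
  · rintro ⟨m, hm, rfl⟩ h hh
    exact (Subalgebra.mem_centralizer_iff K).1 (adjoinLmulAut_le_centralizer hh) _ ⟨m, hm, rfl⟩

theorem span_algEquiv_toLinearMap_subset_adjoinLmulAut :
    (Submodule.span L (Set.range fun g : L ≃ₐ[K] L => (g.toLinearMap : Module.End K L)) :
      Set (Module.End K L)) ⊆ adjoinLmulAut K L := by
  intro f hf
  induction hf using Submodule.span_induction with
  | mem f hf => exact Algebra.subset_adjoin (.inr hf)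
  | zero => exact zero_mem _
  | add f h _ _ hf hh => exact add_mem hf hh
  | smul c f _ hf =>
    have : c • f = Algebra.lmul K L c * f := LinearMap.ext fun _ => rfl
    exact this ▸ mul_mem (Algebra.subset_adjoin (.inl ⟨c, rfl⟩)) hf

theorem restrictScalarsAlgHom_mem_span_algEquiv_toLinearMap [FiniteDimensional K L]
    (f : Module.End (fixedField (⊤ : Subgroup (L ≃ₐ[K] L))) L) :
    Module.End.restrictScalarsAlgHom K _ L f ∈
      Submodule.span L (Set.range fun g : L ≃ₐ[K] L => (g.toLinearMap : Module.End K L)) := by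
  let E := LinearMap.range
    (LinearMap.restrictScalarsₗ K (fixedField (⊤ : Subgroup (L ≃ₐ[K] L))) L L L)
  have hle : Submodule.span L
      (Set.range fun g : L ≃ₐ[K] L => (g.toLinearMap : Module.End K L)) ≤ E := by
    rw [Submodule.span_le]
    rintro _ ⟨g, rfl⟩
    exact mem_range_restrictScalarsAlgHom_iff.2 fun m hm x => by
      simp [(mem_fixedField_iff _ m).1 hm g]
  have hfinrank : finrank L E = Nat.card (L ≃ₐ[K] L) := by
    rw [LinearMap.finrank_range_of_inj (LinearMap.restrictScalars_injective K),
      finrank_linearMap_self, finrank_fixedField_top_eq_card]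
  rw [Submodule.eq_of_le_of_finrank_eq hle
    (by rw [hfinrank, finrank_span_algEquiv_toLinearMap])]
  exact ⟨f, rfl⟩

theorem adjoinLmulAut_eq_range_restrictScalarsAlgHom [FiniteDimensional K L] :
    adjoinLmulAut K L = (Module.End.restrictScalarsAlgHom K
      (fixedField (⊤ : Subgroup (L ≃ₐ[K] L))) L).range := by
  refine le_antisymm (fun f hf => ?_) ?_
  · exact mem_range_restrictScalarsAlgHom_iff.2
      (Algebra.mem_centralizer_lmul_iff.1 (adjoinLmulAut_le_centralizer hf))
  · rintro _ ⟨f, rfl⟩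
    exact span_algEquiv_toLinearMap_subset_adjoinLmulAut
      (restrictScalarsAlgHom_mem_span_algEquiv_toLinearMap f)

end

/-- For a finite field extension `L/K` with `G = Aut_K(L)` and fixed field `L^G`, the
subalgebra of `End_K(L)` generated by `L` and `G` equals `End_{L^G}(L)`, it is simple,
its centre is exactly (the image of) `L^G`, and its degree is `[L : L^G] = |G|`. -/
theorem stmt7 (K L : Type) [Field K] [Field L] [Algebra K L] [FiniteDimensional K L] :
    letI F : IntermediateField K L := IntermediateField.fixedField (⊤ : Subgroup (L ≃ₐ[K] L))
    letI A : Subalgebra K (Module.End K L) := Algebra.adjoin K (Set.range (Algebra.lmul K L) ∪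
      Set.range fun g : L ≃ₐ[K] L => (g.toLinearMap : Module.End K L))
    ((A : Set (Module.End K L)) =
        {f : Module.End K L | ∀ m ∈ F, ∀ x : L, f (m * x) = m * f x}) ∧
    IsSimpleRing A ∧
    (∀ f ∈ A, (∀ h ∈ A, f * h = h * f) ↔ ∃ m ∈ F, f = Algebra.lmul K L m) ∧
    Module.finrank F L = Nat.card (L ≃ₐ[K] L) := by
  have hA := adjoinLmulAut_eq_range_restrictScalarsAlgHom (K := K) (L := L)
  refine ⟨?_, ?_, fun f _ => commute_adjoinLmulAut_iff f,
    finrank_fixedField_top_eq_card K L⟩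
  · ext f
    exact (SetLike.ext_iff.1 hA f).trans mem_range_restrictScalarsAlgHom_iff
  · exact .of_ringEquiv
      ((AlgEquiv.ofInjective _ (Module.End.restrictScalarsAlgHom_injective _ _ _)).trans
        (Subalgebra.equivOfEq _ _ hA.symm)).toRingEquiv inferInstance
end

section
/- Let L/K be a finite field extension with automorphism group G. The ring of endomorphisms of L as a module over the skew group algebra L⋊G is isomorphic to the fixed field L^G. -/
/-- The centralizer of an adjoined set equals the centralizer of the set. -/
lemma centralizer_adjoin_eq {R A : Type*} [CommSemiring R] [Semiring A] [Algebra R A]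
    (s : Set A) :
    Subalgebra.centralizer R ((Algebra.adjoin R s : Subalgebra R A) : Set A) =
      Subalgebra.centralizer R s := by
  apply le_antisymm
  · exact Subalgebra.centralizer_le R _ _ (Algebra.subset_adjoin)
  · intro z hz
    rw [Subalgebra.mem_centralizer_iff] at hz ⊢
    intro g hg
    have hle : Algebra.adjoin R s ≤ Subalgebra.centralizer R {z} := by
      apply Algebra.adjoin_le
      intro x hx
      rw [SetLike.mem_coe, Subalgebra.mem_centralizer_iff]
      rintro y rfl
      exact (hz x hx).symm
    have h2 := hle hg
    rw [Subalgebra.mem_centralizer_iff] at h2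
    exact (h2 z rfl).symm

/-- For a finite field extension `L/K` with `G = Aut_K(L)`, the ring of endomorphisms of `L`
as a module over the skew group algebra `L⋊G ⊆ End_K(L)` (equivalently, the centralizer of
`L⋊G` in `End_K(L)`) is (the image of) the fixed field `L^G`, and in particular it is
isomorphic, as a ring, to `L^G`. -/
theorem stmt8 (K L : Type) [Field K] [Field L] [Algebra K L] [FiniteDimensional K L] :
    letI F : IntermediateField K L := IntermediateField.fixedField (⊤ : Subgroup (L ≃ₐ[K] L))
    letI A : Subalgebra K (Module.End K L) := Algebra.adjoin K (Set.range (Algebra.lmul K L) ∪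
      Set.range fun g : L ≃ₐ[K] L => (g.toLinearMap : Module.End K L))
    ((Subalgebra.centralizer K (A : Set (Module.End K L)) :
        Subalgebra K (Module.End K L)) : Set (Module.End K L)) =
      (Algebra.lmul K L) '' (F : Set L) ∧
    Nonempty ((Subalgebra.centralizer K (A : Set (Module.End K L))) ≃+* F) := by
  set F : IntermediateField K L := IntermediateField.fixedField (⊤ : Subgroup (L ≃ₐ[K] L))
    with hF
  set A : Subalgebra K (Module.End K L) := Algebra.adjoin K (Set.range (Algebra.lmul K L) ∪
      Set.range fun g : L ≃ₐ[K] L => (g.toLinearMap : Module.End K L)) with hAdef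
  set s : Set (Module.End K L) := Set.range (Algebra.lmul K L) ∪
      Set.range fun g : L ≃ₐ[K] L => (g.toLinearMap : Module.End K L) with hs
  have lmul_app : ∀ a b : L, Algebra.lmul K L a b = a * b := fun a b => rfl
  have hFmem : ∀ x : L, x ∈ F ↔ ∀ g : L ≃ₐ[K] L, g x = x := by
    intro x
    rw [hF]
    show x ∈ MulAction.fixedPoints _ _ ↔ _
    rw [MulAction.mem_fixedPoints]
    constructor
    · intro h g
      simpa [Subgroup.smul_def, AlgEquiv.smul_def] using h ⟨g, trivial⟩
    · rintro h ⟨g, -⟩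
      simpa [Subgroup.smul_def, AlgEquiv.smul_def] using h g
  have hA : Subalgebra.centralizer K (A : Set (Module.End K L)) =
      Subalgebra.centralizer K s := centralizer_adjoin_eq s
  have hmem : ∀ f : Module.End K L,
      f ∈ Subalgebra.centralizer K (A : Set (Module.End K L)) ↔
      (f 1 ∈ F ∧ f = Algebra.lmul K L (f 1)) := by
    intro f
    rw [hA, Subalgebra.mem_centralizer_iff]
    constructor
    · intro h
      have hL : ∀ x y : L, f (x * y) = x * f y := by
        intro x y
        have h1 := h (Algebra.lmul K L x) (Set.mem_union_left _ ⟨x, rfl⟩)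
        have h2 := congrFun (congrArg DFunLike.coe h1) y
        simpa [lmul_app] using h2.symm
      have hf : f = Algebra.lmul K L (f 1) := by
        ext y
        rw [lmul_app]
        calc f y = f (y * 1) := by rw [mul_one]
        _ = y * f 1 := hL y 1
        _ = f 1 * y := mul_comm _ _
      refine ⟨?_, hf⟩
      rw [hFmem]
      intro g
      have h1 := h g.toLinearMap (Set.mem_union_right _ ⟨g, rfl⟩)
      have h2 := congrFun (congrArg DFunLike.coe h1) 1
      simpa using h2
    · rintro ⟨hc, hfe⟩
      rw [hfe]
      intro x hx
      rcases hx with ⟨y, rfl⟩ | ⟨g, rfl⟩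
      · ext z
        simp only [Module.End.mul_apply, lmul_app]
        ring
      · ext z
        simp only [Module.End.mul_apply, lmul_app, AlgEquiv.toLinearMap_apply]
        rw [map_mul, (hFmem (f 1)).mp hc g]
  have hset : ((Subalgebra.centralizer K (A : Set (Module.End K L)) :
        Subalgebra K (Module.End K L)) : Set (Module.End K L)) =
      (Algebra.lmul K L) '' (F : Set L) := by
    ext f
    simp only [SetLike.mem_coe, hmem, Set.mem_image]
    constructor
    · rintro ⟨h1, h2⟩; exact ⟨f 1, h1, h2.symm⟩
    · rintro ⟨c, hc, rfl⟩
      have h1 : (Algebra.lmul K L c) 1 = c := by rw [lmul_app, mul_one]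
      rw [h1]; exact ⟨hc, rfl⟩
  refine ⟨hset, ⟨?_⟩⟩
  have hinj : Function.Injective (Algebra.lmul K L : L →ₐ[K] Module.End K L) :=
    Algebra.lmul_injective
  refine (RingEquiv.ofBijective
    ({ toFun := fun c => ⟨Algebra.lmul K L (c : L), by
        rw [← SetLike.mem_coe, hset]; exact ⟨(c : L), c.2, rfl⟩⟩
       map_one' := by ext z; simp [lmul_app]
       map_mul' := by intro a b; ext z; simp [lmul_app, mul_assoc]
       map_zero' := by ext z; simp [lmul_app]
       map_add' := by intro a b; ext z; simp [lmul_app, add_mul] } :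
      F →+* (Subalgebra.centralizer K (A : Set (Module.End K L)))) ?_).symm
  constructor
  · intro a b hab
    have h1 := congrArg Subtype.val hab
    exact Subtype.ext (hinj h1)
  · rintro ⟨f, hf⟩
    have hf' : f ∈ (Algebra.lmul K L) '' (F : Set L) := by
      rw [← hset]; exact hf
    rcases hf' with ⟨c, hc, rfl⟩
    exact ⟨⟨c, hc⟩, rfl⟩
end

section
/- Let L/K be a finite field extension with automorphism group G. For distinct g, g' ∈ G, the L-bimodules L·g and L·g' inside L⋊G are simple and non-isomorphic; hence L⋊G = ⊕_{g∈G} Lg is a direct sum of pairwise non-isomorphic simple L-bimodules. -/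
/-- For a finite field extension `L/K` with `G = Aut_K(L)`, the `L`-bimodules `L·g ⊆ L⋊G`
(`g ∈ G`) are simple and pairwise non-isomorphic; hence `L⋊G = ⊕_{g∈G} L·g` is a direct sum
of pairwise non-isomorphic simple `L`-bimodules.  Here `L·g` is the `L`-span of `g` inside
`End_K(L)`, an `L`-bimodule via `l·(λg)·l' = lλg(l')g`, i.e. post- and pre-composition with
left multiplications. -/
theorem stmt9 (K L : Type) [Field K] [Field L] [Algebra K L] [FiniteDimensional K L] :
    letI Mg : (L ≃ₐ[K] L) → Submodule L (Module.End K L) :=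
      fun g => Submodule.span L {(g.toLinearMap : Module.End K L)}
    -- each `L·g` is nonzero
    (∀ g : L ≃ₐ[K] L, Mg g ≠ ⊥) ∧
    -- each `L·g` is a simple `L`-bimodule: its only sub-bimodules are `⊥` and itself
    (∀ g : L ≃ₐ[K] L, ∀ p : Submodule L (Module.End K L), p ≤ Mg g →
        (∀ f ∈ p, ∀ l : L, f * Algebra.lmul K L l ∈ p) → p = ⊥ ∨ p = Mg g) ∧
    -- for `g ≠ g'` every `L`-bimodule homomorphism `L·g → L·g'` is zero
    (∀ g g' : L ≃ₐ[K] L, g ≠ g' →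
        ∀ φ : Module.End K L →ₗ[L] Module.End K L,
          (∀ f ∈ Mg g, φ f ∈ Mg g') →
          (∀ f ∈ Mg g, ∀ l : L, φ (f * Algebra.lmul K L l) = φ f * Algebra.lmul K L l) →
          ∀ f ∈ Mg g, φ f = 0) ∧
    -- the sum `∑_{g∈G} L·g` is direct
    iSupIndep Mg := by
  have hne : ∀ g : L ≃ₐ[K] L, (g.toLinearMap : Module.End K L) ≠ 0 := by
    intro g h
    have := LinearMap.congr_fun h 1
    simp at this
  have hmul : ∀ (g : L ≃ₐ[K] L) (l : L),
      (g.toLinearMap : Module.End K L) * Algebra.lmul K L l = g l • g.toLinearMap := by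
    intro g l
    ext x
    simp [Module.End.mul_apply, map_mul]
  refine ⟨?_, ?_, ?_, ?_⟩
  · intro g h
    exact hne g ((Submodule.span_singleton_eq_bot).1 h)
  · intro g p hle _
    rcases eq_or_ne p ⊥ with h | h
    · exact Or.inl h
    · right
      obtain ⟨f, hf, hf0⟩ := Submodule.exists_mem_ne_zero_of_ne_bot h
      obtain ⟨c, hc⟩ := Submodule.mem_span_singleton.1 (hle hf)
      have hc0 : c ≠ 0 := by rintro rfl; simp [← hc] at hf0
      refine le_antisymm hle ?_
      rw [Submodule.span_singleton_le_iff_mem]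
      have : c⁻¹ • f ∈ p := p.smul_mem _ hf
      rwa [← hc, smul_smul, inv_mul_cancel₀ hc0, one_smul] at this
  · intro g g' hgg' φ hφmem hφcomm f hf
    have hgmem : (g.toLinearMap : Module.End K L) ∈
        Submodule.span L {(g.toLinearMap : Module.End K L)} :=
      Submodule.mem_span_singleton_self _
    obtain ⟨c, hc⟩ := Submodule.mem_span_singleton.1 (hφmem _ hgmem)
    have hc0 : c = 0 := by
      obtain ⟨l, hl⟩ : ∃ l : L, g l ≠ g' l := by
        by_contra h
        push_neg at h
        exact hgg' (AlgEquiv.ext h)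
      have h1 := hφcomm _ hgmem l
      have lhs : φ (g.toLinearMap * Algebra.lmul K L l) = (g l * c) • g'.toLinearMap := by
        rw [hmul, map_smul, ← hc, smul_smul]
      have rhs : φ g.toLinearMap * Algebra.lmul K L l = (c * g' l) • g'.toLinearMap := by
        rw [← hc, smul_mul_assoc, hmul, smul_smul]
      have h5 := lhs.symm.trans (h1.trans rhs)
      have h3 : g l * c = c * g' l := smul_left_injective L (hne g') h5
      by_contra hcne
      have h4 : g l * c = g' l * c := by rw [h3, mul_comm]
      exact hl (mul_right_cancel₀ hcne h4)
    obtain ⟨a, ha⟩ := Submodule.mem_span_singleton.1 hf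
    rw [← ha, map_smul, ← hc, hc0, zero_smul, smul_zero]
  · have hind : LinearIndependent L (fun g : L ≃ₐ[K] L => (g.toLinearMap : Module.End K L)) := by
      have := (linearIndependent_toLinearMap K L L).comp
        (fun g : L ≃ₐ[K] L => (g : L →ₐ[K] L))
        (fun a b h => by
          ext x
          exact AlgHom.congr_fun h x)
      exact this
    exact hind.iSupIndep_span_singleton
end

section
/- Let L/K be a finite field extension with automorphism group G. A subalgebra A of L⋊G containing L is stable under conjugation by all elements of G (i.e. gAg^{-1} = A for all g ∈ G) if and only if A = L⋊N for a normal subgroup N of G. -/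
/-!
Inside `End_K(L)`, `L⋊G` is the `L`-span of `G`, and for a subalgebra `A ⊇ L` the candidate
is `N = {g ∈ G | g ∈ A}`: a submonoid of the finite group `G`, hence a subgroup, and normal as
soon as `A` is stable under conjugation. The real content is `A ⊆ L⋊N`. If `∑ c_g g ∈ A`, then
`(∑ c_g g) x - g₁(x) (∑ c_g g) = ∑ c_g (g(x) - g₁(x)) g` is again in `A`; choosing `x` with
`g₀(x) ≠ g₁(x)` removes `g₁` from the support while keeping `g₀`, so by induction every `g` with
`c_g ≠ 0` lies in `A` (Dedekind's independence argument). Conversely, conjugation by `g` maps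
`L⋊N` to `L⋊(gNg⁻¹) = L⋊N`.
-/

open Submodule

variable {K L : Type*} [Field K] [Field L] [Algebra K L]

namespace AlgEquiv

lemma toLinearMap_mul_smul (g : L ≃ₐ[K] L) (c : L) (f : Module.End K L) :
    g.toLinearMap * (c • f) = g c • (g.toLinearMap * f) :=
  LinearMap.ext fun x => map_mul g c (f x)

lemma sum_smul_toLinearMap_mul_lmul_sub (s : Finset (L ≃ₐ[K] L)) (c : (L ≃ₐ[K] L) → L) (x y : L) :
    (∑ g ∈ s, c g • g.toLinearMap) * Algebra.lmul K L x - Algebra.lmul K L y *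
      ∑ g ∈ s, c g • g.toLinearMap = ∑ g ∈ s, (c g * (g x - y)) • g.toLinearMap := by
  rw [Finset.sum_mul, Finset.mul_sum, ← Finset.sum_sub_distrib]
  refine Finset.sum_congr rfl fun g _ => LinearMap.ext fun z => ?_
  simp only [LinearMap.sub_apply, Module.End.mul_apply, LinearMap.smul_apply,
    Algebra.coe_lmul_eq_mul, LinearMap.mul_apply', AlgEquiv.toLinearMap_apply, map_mul, smul_eq_mul]
  ring

lemma mul_mem_span_image_toLinearMap {S T U : Set (L ≃ₐ[K] L)}
    (hU : ∀ s ∈ S, ∀ t ∈ T, s * t ∈ U) {f f' : Module.End K L}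
    (hf : f ∈ span L (toLinearMap '' S)) (hf' : f' ∈ span L (toLinearMap '' T)) :
    f * f' ∈ span L (toLinearMap '' U) := by
  induction hf using span_induction with
  | mem _ h =>
    obtain ⟨s, hs, rfl⟩ := h
    induction hf' using span_induction with
    | mem _ h => obtain ⟨t, ht, rfl⟩ := h; exact subset_span ⟨s * t, hU s hs t ht, rfl⟩
    | zero => simp
    | add _ _ _ _ h h' => rw [mul_add]; exact add_mem h h'
    | smul c _ _ h => rw [toLinearMap_mul_smul]; exact smul_mem _ _ h
  | zero => simp
  | add _ _ _ _ h h' => rw [add_mul]; exact add_mem h h'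
  | smul c _ _ h => rw [smul_mul_assoc]; exact smul_mem _ _ h

lemma toLinearMap_mul_mul_symm_mem_span {N : Subgroup (L ≃ₐ[K] L)} (hN : N.Normal)
    (g : L ≃ₐ[K] L) {f : Module.End K L} (hf : f ∈ span L (toLinearMap '' (N : Set _))) :
    g.toLinearMap * f * g.symm.toLinearMap ∈ span L (toLinearMap '' (N : Set _)) := by
  have hg : ∀ h : L ≃ₐ[K] L, h.toLinearMap ∈ span L (toLinearMap '' {h}) := fun h =>
    subset_span ⟨h, rfl, rfl⟩
  refine mul_mem_span_image_toLinearMap (S := {h | h * g⁻¹ ∈ N}) (T := {g⁻¹}) ?_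
    (mul_mem_span_image_toLinearMap ?_ (hg g) hf) (hg g⁻¹)
  · rintro h hh _ rfl; exact hh
  · intro s hs n hn
    rw [Set.mem_singleton_iff.1 hs]
    exact hN.conj_mem n hn g

end AlgEquiv

variable (K L) in
def skewGroupAlgebra : Subalgebra K (Module.End K L) where
  carrier := span L (Set.range fun g : L ≃ₐ[K] L => (g.toLinearMap : Module.End K L))
  mul_mem' {f f'} hf hf' := by
    simp only [SetLike.mem_coe, ← Set.image_univ] at hf hf' ⊢
    exact AlgEquiv.mul_mem_span_image_toLinearMap (fun _ _ _ _ => Set.mem_univ _) hf hf'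
  add_mem' := add_mem
  algebraMap_mem' r := by
    rw [Algebra.algebraMap_eq_smul_one, ← algebraMap_smul L r]
    exact smul_mem _ _ (subset_span ⟨1, rfl⟩)

lemma lmul_mem_skewGroupAlgebra (x : L) : Algebra.lmul K L x ∈ skewGroupAlgebra K L := by
  have : Algebra.lmul K L x = x • (1 : L ≃ₐ[K] L).toLinearMap := LinearMap.ext fun _ => rfl
  rw [this]
  exact smul_mem _ _ (subset_span ⟨1, rfl⟩)

lemma adjoin_le_skewGroupAlgebra :
    Algebra.adjoin K (Set.range (Algebra.lmul K L) ∪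
      Set.range fun g : L ≃ₐ[K] L => (g.toLinearMap : Module.End K L)) ≤ skewGroupAlgebra K L :=
  Algebra.adjoin_le <| Set.union_subset (Set.range_subset_iff.2 lmul_mem_skewGroupAlgebra)
    fun _ h => subset_span h

namespace Subalgebra

variable {A : Subalgebra K (Module.End K L)}

lemma smul_mem_of_lmul_range_le (hA : (Algebra.lmul K L).range ≤ A) (c : L)
    {f : Module.End K L} (hf : f ∈ A) : c • f ∈ A :=
  A.mul_mem (hA ⟨c, rfl⟩) hf

lemma span_le_of_lmul_range_le (hA : (Algebra.lmul K L).range ≤ A) {S : Set (Module.End K L)}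
    (hS : S ⊆ A) : (span L S : Set (Module.End K L)) ⊆ A := fun f hf => by
  induction hf using span_induction with
  | mem _ h => exact hS h
  | zero => exact A.zero_mem
  | add _ _ _ _ h h' => exact A.add_mem h h'
  | smul c _ _ h => exact smul_mem_of_lmul_range_le hA c h

lemma toLinearMap_mem_of_sum_smul_mem (hA : (Algebra.lmul K L).range ≤ A)
    (s : Finset (L ≃ₐ[K] L)) (c : (L ≃ₐ[K] L) → L)
    (hs : ∑ g ∈ s, c g • (g.toLinearMap : Module.End K L) ∈ A)
    {g₀ : L ≃ₐ[K] L} (hg₀ : g₀ ∈ s) (hc : c g₀ ≠ 0) : (g₀.toLinearMap : Module.End K L) ∈ A := by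
  classical
  induction s using Finset.strongInduction generalizing c with
  | _ s ih =>
  by_cases hsingle : ∀ g ∈ s, g = g₀
  · rw [Finset.sum_eq_single_of_mem g₀ hg₀ fun g hg hne => absurd (hsingle g hg) hne] at hs
    simpa [hc] using smul_mem_of_lmul_range_le hA (c g₀)⁻¹ hs
  obtain ⟨g₁, hg₁, hne⟩ := not_forall₂.1 hsingle
  obtain ⟨x, hx⟩ : ∃ x, g₀ x ≠ g₁ x := by
    by_contra! h
    exact hne (AlgEquiv.ext fun x => (h x).symm)
  refine ih (s.erase g₁) (Finset.erase_ssubset hg₁) (fun g => c g * (g x - g₁ x)) ?_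
    (Finset.mem_erase.2 ⟨Ne.symm hne, hg₀⟩) (mul_ne_zero hc (sub_ne_zero.2 hx))
  rw [Finset.sum_erase _ (by simp), ← AlgEquiv.sum_smul_toLinearMap_mul_lmul_sub]
  exact A.sub_mem (A.mul_mem hs (hA ⟨x, rfl⟩)) (A.mul_mem (hA ⟨_, rfl⟩) hs)

variable (A) in
def autSubgroup [Finite (L ≃ₐ[K] L)] : Subgroup (L ≃ₐ[K] L) where
  toSubmonoid := A.toSubmonoid.comap (AlgEquiv.toLinearMapHom K L)
  inv_mem' {g} hg := Submonoid.powers_le.2 hg <|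
    (isOfFinOrder_of_finite g).mem_powers_iff_mem_zpowers.2 (inv_mem (Subgroup.mem_zpowers g))

variable [Finite (L ≃ₐ[K] L)]

lemma autSubgroup_normal
    (hA : ∀ g : L ≃ₐ[K] L, ∀ f ∈ A, g.toLinearMap * f * g.symm.toLinearMap ∈ A) :
    (autSubgroup A).Normal where
  conj_mem _ hn g := hA g _ hn

lemma coe_eq_span_autSubgroup (hLA : (Algebra.lmul K L).range ≤ A)
    (hAG : A ≤ skewGroupAlgebra K L) :
    (A : Set (Module.End K L)) =
      span L ((fun g : L ≃ₐ[K] L => (g.toLinearMap : Module.End K L)) '' (autSubgroup A)) := by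
  refine subset_antisymm (fun f hf => ?_)
    (span_le_of_lmul_range_le hLA (Set.image_subset_iff.2 fun _ hg => hg))
  obtain ⟨c, rfl⟩ := Finsupp.mem_span_range_iff_exists_finsupp.1 (hAG hf)
  refine sum_mem fun g hg => Submodule.smul_mem _ (c g) (subset_span ⟨g, ?_, rfl⟩)
  exact toLinearMap_mem_of_sum_smul_mem hLA _ _ hf hg (Finsupp.mem_support_iff.1 hg)

end Subalgebra

/-- For a finite field extension `L/K` with `G = Aut_K(L)`, a subalgebra `A` of `L⋊G`
containing `L` is stable under conjugation by every element of `G` (each `g ∈ G` being a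
unit of `L⋊G`, with inverse `g⁻¹`) if and only if `A = L⋊N` for a normal subgroup `N` of
`G`. -/
theorem stmt11 (K L : Type) [Field K] [Field L] [Algebra K L] [FiniteDimensional K L] :
    letI LG : Subalgebra K (Module.End K L) := Algebra.adjoin K (Set.range (Algebra.lmul K L) ∪
      Set.range fun g : L ≃ₐ[K] L => (g.toLinearMap : Module.End K L))
    ∀ A : Subalgebra K (Module.End K L), (Algebra.lmul K L).range ≤ A → A ≤ LG →
      ((∀ g : L ≃ₐ[K] L, ∀ a ∈ A,
          (g.toLinearMap : Module.End K L) * a * (g.symm.toLinearMap : Module.End K L) ∈ A) ↔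
        ∃ N : Subgroup (L ≃ₐ[K] L), N.Normal ∧
          (A : Set (Module.End K L)) =
            (Submodule.span L ((fun g : L ≃ₐ[K] L => (g.toLinearMap : Module.End K L)) ''
                (N : Set (L ≃ₐ[K] L))) :
              Submodule L (Module.End K L))) := by
  intro A hLA hALG
  constructor
  · intro hconj
    exact ⟨A.autSubgroup, Subalgebra.autSubgroup_normal hconj,
      Subalgebra.coe_eq_span_autSubgroup hLA (hALG.trans adjoin_le_skewGroupAlgebra)⟩
  · rintro ⟨N, hN, hAN⟩ g f hf
    rw [← SetLike.mem_coe, hAN] at hf ⊢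
    exact AlgEquiv.toLinearMap_mul_mul_symm_mem_span hN g hf
end

section
/- Let L/K be a finite Galois extension. Then for every intermediate field K ⊆ M ⊆ L, the extension L/M is Galois, and the centralizer of M in End_K(L) equals L⋊Aut_M(L) with |Aut_M(L)| = [L:M]. -/
/-!
A `K`-linear endomorphism of `L` commuting with multiplication by `M` is `M`-linear. Since `L/M`
is Galois, Dedekind's independence of characters makes `Aut_M(L)` an `L`-linearly independent
family in `End_M(L)` of size `[L:M] = dim_L End_M(L)`, hence an `L`-basis; so every such
endomorphism is a sum `∑ a_σ σ`.
-/

theorem mem_centralizer_lmul_image_iff {R A : Type*} [CommSemiring R] [Semiring A] [Algebra R A]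
    {S : Set A} {f : Module.End R A} :
    f ∈ Subalgebra.centralizer R (Algebra.lmul R A '' S) ↔ ∀ s ∈ S, ∀ x, f (s * x) = s * f x := by
  simp only [Subalgebra.mem_centralizer_iff, Set.forall_mem_image, LinearMap.ext_iff,
    Module.End.mul_apply, Algebra.coe_lmul_eq_mul, LinearMap.mul_apply']
  exact forall₂_congr fun _ _ => forall_congr' fun _ => eq_comm

theorem IsGalois.span_algEquiv_toLinearMap_eq_top (F E : Type*) [Field F] [Field E] [Algebra F E]
    [FiniteDimensional F E] [IsGalois F E] :
    Submodule.span E (Set.range fun σ : Gal(E/F) => σ.toLinearMap) = ⊤ := by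
  have hli : LinearIndependent E fun σ : Gal(E/F) => σ.toLinearMap :=
    (linearIndependent_algHom_toLinearMap F E E).comp (fun σ : Gal(E/F) => (σ : E →ₐ[F] E))
      AlgEquiv.coe_toAlgHom_injective
  apply hli.span_eq_top_of_card_eq_finrank
  rw [Module.finrank_linearMap_self, ← IsGalois.card_aut_eq_finrank, Nat.card_eq_fintype_card]

namespace IntermediateField

variable {K L : Type*} [Field K] [Field L] [Algebra K L]

/-- The subalgebra `L ⋊ Aut_M(L)` of `End_K(L)`. -/
def skewGroupEnd (M : IntermediateField K L) : Subalgebra K (Module.End K L) :=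
  Algebra.adjoin K (Set.range (Algebra.lmul K L) ∪
    (fun g : L ≃ₐ[K] L => (g.toLinearMap : Module.End K L)) ''
      (M.fixingSubgroup : Set (L ≃ₐ[K] L)))

theorem restrictScalars_mem_skewGroupEnd (M : IntermediateField K L)
    [FiniteDimensional M L] [IsGalois M L] (g : L →ₗ[M] L) :
    g.restrictScalars K ∈ M.skewGroupEnd := by
  have hg : g ∈ Submodule.span L (Set.range fun σ : Gal(L/M) => σ.toLinearMap) := by
    rw [IsGalois.span_algEquiv_toLinearMap_eq_top]; trivial
  induction hg using Submodule.span_induction with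
  | mem _ h =>
    obtain ⟨σ, rfl⟩ := h
    exact Algebra.subset_adjoin (Or.inr ⟨(fixingSubgroupEquiv M).symm σ, SetLike.coe_mem _, rfl⟩)
  | zero => exact zero_mem _
  | add _ _ _ _ h₁ h₂ => exact add_mem h₁ h₂
  | smul a _ _ h =>
    exact mul_mem (Algebra.subset_adjoin (Or.inl ⟨a, rfl⟩) : Algebra.lmul K L a ∈ M.skewGroupEnd) h

theorem skewGroupEnd_le_centralizer (M : IntermediateField K L) :
    M.skewGroupEnd ≤ Subalgebra.centralizer K (Algebra.lmul K L '' (M : Set L)) := by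
  rw [skewGroupEnd, Algebra.adjoin_le_iff]
  rintro _ (⟨a, rfl⟩ | ⟨σ, hσ, rfl⟩) <;> rw [SetLike.mem_coe, mem_centralizer_lmul_image_iff] <;>
    intro m hm x
  · exact mul_left_comm a m x
  · rw [AlgEquiv.toLinearMap_apply, AlgEquiv.toLinearMap_apply, map_mul,
      (mem_fixingSubgroup_iff M σ).mp hσ m hm]

theorem centralizer_lmul_eq_skewGroupEnd (M : IntermediateField K L)
    [FiniteDimensional M L] [IsGalois M L] :
    Subalgebra.centralizer K (Algebra.lmul K L '' (M : Set L)) = M.skewGroupEnd := by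
  refine le_antisymm (fun f hf => ?_) M.skewGroupEnd_le_centralizer
  rw [mem_centralizer_lmul_image_iff] at hf
  exact restrictScalars_mem_skewGroupEnd M
    { toFun := f, map_add' := f.map_add, map_smul' := fun m x => hf m m.2 x }

end IntermediateField

/-- Let `L/K` be a finite Galois extension and `M` an intermediate field.  Then `L/M` is
Galois, the centralizer of (the image of) `M` in `End_K(L)` equals `L⋊Aut_M(L)` (where
`Aut_M(L) ⊆ Aut_K(L)` is the subgroup fixing `M` pointwise), and `|Aut_M(L)| = [L:M]`. -/
theorem stmt13 (K L : Type) [Field K] [Field L] [Algebra K L] [FiniteDimensional K L]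
    [IsGalois K L] (M : IntermediateField K L) :
    IsGalois M L ∧
    Subalgebra.centralizer K ((Algebra.lmul K L) '' (M : Set L)) =
      Algebra.adjoin K (Set.range (Algebra.lmul K L) ∪
        (fun g : L ≃ₐ[K] L => (g.toLinearMap : Module.End K L)) ''
          (M.fixingSubgroup : Set (L ≃ₐ[K] L))) ∧
    Nat.card M.fixingSubgroup = Module.finrank M L :=
  ⟨inferInstance, M.centralizer_lmul_eq_skewGroupEnd, IsGalois.card_fixingSubgroup_eq_finrank M⟩
end

section
/- Let L/K be a finite Galois extension with Galois group G and A a K-subalgebra of End_K(L) containing L. Then the centralizer of A in End_K(L) equals the fixed field L^{A∩G}, where A∩G is the set of automorphisms of L lying in A. -/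
/-!
`End_K(L)` is an `L`-vector space with basis `G` (Dedekind independence and `|G| = [L : K]`).
Right multiplication by `y ∈ L` preserves `A` and acts on the basis vector `g` by the scalar
`g y`; since distinct automorphisms give distinct characters `y ↦ g y`, the usual
eigenvector-elimination argument shows that every `g` occurring in an element of `A` lies in `A`.
So `A` is generated by `L` and `A ∩ G`, and its centralizer is that of `L ∪ (A ∩ G)`: the
commutant of `L` is `L` itself, and `l ∈ L` commutes with `g` iff `g l = l`.
-/

open Module

theorem Module.Basis.repr_apply_of_forall_apply_eq_smul {F M ι : Type*} [Field F]
    [AddCommGroup M] [Module F M]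
    (b : Basis ι F M) {f : Module.End F M} {μ : ι → F} (hf : ∀ i, f (b i) = μ i • b i)
    (x : M) (i : ι) : b.repr (f x) i = μ i * b.repr x i := by
  have : (b.coord i).comp f = μ i • b.coord i := b.ext fun j => by
    by_cases h : j = i
    · subst h; simp [hf]
    · simp [hf, h]
  simpa using congrArg (· x) this

theorem Submodule.basis_mem_of_repr_ne_zero {F M ι Y : Type*} [Field F] [AddCommGroup M]
    [Module F M] (b : Basis ι F M) (f : Y → Module.End F M) (χ : ι → Y → F)
    (hχ : Function.Injective χ) (hf : ∀ y i, f y (b i) = χ i y • b i) {p : Submodule F M}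
    (hp : ∀ y, ∀ x ∈ p, f y x ∈ p) {x : M} (hx : x ∈ p) {i : ι} (hi : b.repr x i ≠ 0) :
    b i ∈ p := by
  classical
  induction hn : (b.repr x).support.card using Nat.strong_induction_on generalizing x with
  | _ n ih =>
  by_cases hsingle : ∀ j ∈ (b.repr x).support, j = i
  · have hx_eq : b.repr x = Finsupp.single i (b.repr x i) :=
      Finsupp.eq_single_iff.2 ⟨fun j hj => Finset.mem_singleton.2 (hsingle j hj), rfl⟩
    have : b i = (b.repr x i)⁻¹ • x := by
      conv_rhs => rw [← b.linearCombination_repr x, hx_eq]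
      simp [inv_smul_smul₀ hi]
    rw [this]
    exact p.smul_mem _ hx
  push Not at hsingle
  obtain ⟨j, hj, hji⟩ := hsingle
  obtain ⟨y, hy⟩ : ∃ y, χ i y ≠ χ j y := by
    by_contra! h
    exact hji (hχ (funext h)).symm
  -- subtracting `χ j y • x` from `f y x` kills the `j`-th coordinate and keeps the `i`-th one
  have hrepr : ∀ k, b.repr (f y x - χ j y • x) k = (χ k y - χ j y) * b.repr x k := by
    intro k
    simp [b.repr_apply_of_forall_apply_eq_smul (hf y), sub_mul]
  have hsupp : (b.repr (f y x - χ j y • x)).support ⊆ (b.repr x).support.erase j := by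
    intro k hk
    rw [Finsupp.mem_support_iff, hrepr] at hk
    refine Finset.mem_erase.2 ⟨?_, Finsupp.mem_support_iff.2 (right_ne_zero_of_mul hk)⟩
    rintro rfl
    simp at hk
  refine ih _ ?_ (x := f y x - χ j y • x) (sub_mem (hp y x hx) (p.smul_mem _ hx)) ?_ rfl
  · exact hn ▸ (Finset.card_le_card hsupp).trans_lt (Finset.card_erase_lt_of_mem hj)
  · rw [hrepr]
    exact mul_ne_zero (sub_ne_zero.2 hy) hi

section

variable {K L : Type*} [CommRing K] [CommRing L] [Algebra K L]

theorem LinearMap.eq_lmul_of_forall_commute_lmul {f : Module.End K L}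
    (hf : ∀ y, Commute (Algebra.lmul K L y) f) : f = Algebra.lmul K L (f 1) := by
  ext y
  simpa [mul_comm] using (LinearMap.congr_fun (hf y) 1).symm

theorem AlgEquiv.commute_lmul_toLinearMap_iff {l : L} {g : L ≃ₐ[K] L} :
    Commute (Algebra.lmul K L l) g.toLinearMap ↔ g l = l := by
  refine ⟨fun h => ?_, fun h => LinearMap.ext fun x => ?_⟩
  · simpa using (LinearMap.congr_fun h 1).symm
  · simp [Module.End.mul_apply, h]

theorem AlgEquiv.lcomp_lmul_toLinearMap (y : L) (g : L ≃ₐ[K] L) :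
    LinearMap.lcomp L L (Algebra.lmul K L y) g.toLinearMap = g y • g.toLinearMap := by
  ext x
  simp

def Subalgebra.toSubmoduleOfRangeLmulLE {A : Subalgebra K (Module.End K L)}
    (hLA : (Algebra.lmul K L).range ≤ A) : Submodule L (Module.End K L) where
  carrier := A
  add_mem' := add_mem
  zero_mem' := zero_mem A
  smul_mem' c a ha := by
    have : c • a = Algebra.lmul K L c * a := by ext; simp
    exact this ▸ mul_mem (hLA ⟨c, rfl⟩) ha

end

namespace IsGalois

variable (K L : Type*) [Field K] [Field L] [Algebra K L] [FiniteDimensional K L] [IsGalois K L]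

noncomputable def autBasis : Basis (L ≃ₐ[K] L) L (Module.End K L) :=
  basisOfLinearIndependentOfCardEqFinrank
    ((linearIndependent_toLinearMap K L L).comp _ AlgEquiv.coe_toAlgHom_injective)
    (by rw [← Nat.card_eq_fintype_card, IsGalois.card_aut_eq_finrank,
      Module.finrank_linearMap_self])

@[simp] theorem autBasis_apply (g : L ≃ₐ[K] L) : autBasis K L g = g.toLinearMap := by
  simp [autBasis]

variable {K L} {A : Subalgebra K (Module.End K L)}

theorem toLinearMap_mem_of_repr_ne_zero (hLA : (Algebra.lmul K L).range ≤ A)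
    {a : Module.End K L} (ha : a ∈ A) {g : L ≃ₐ[K] L} (hg : (autBasis K L).repr a g ≠ 0) :
    g.toLinearMap ∈ A := by
  rw [← autBasis_apply K L g]
  exact Submodule.basis_mem_of_repr_ne_zero (autBasis K L)
    (fun y => LinearMap.lcomp L L (Algebra.lmul K L y)) (fun g y => g y)
    (fun g h hgh => AlgEquiv.ext (congrFun hgh))
    (fun y g => by simpa using AlgEquiv.lcomp_lmul_toLinearMap y g)
    (p := Subalgebra.toSubmoduleOfRangeLmulLE hLA)
    (fun y _ ha => show _ ∈ A from mul_mem ha (hLA ⟨y, rfl⟩)) ha hg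

theorem le_adjoin_range_lmul_union (hLA : (Algebra.lmul K L).range ≤ A) :
    A ≤ Algebra.adjoin K (Set.range (Algebra.lmul K L) ∪
      AlgEquiv.toLinearMap '' {g : L ≃ₐ[K] L | g.toLinearMap ∈ A}) := by
  intro a ha
  rw [← (autBasis K L).sum_repr a]
  refine Subalgebra.sum_mem _ fun g _ => ?_
  by_cases hg : (autBasis K L).repr a g = 0
  · simp [hg]
  have : (autBasis K L).repr a g • autBasis K L g =
      Algebra.lmul K L ((autBasis K L).repr a g) * g.toLinearMap := by
    ext; simp
  rw [this]
  exact mul_mem (Algebra.subset_adjoin (Or.inl ⟨_, rfl⟩))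
    (Algebra.subset_adjoin (Or.inr ⟨g, toLinearMap_mem_of_repr_ne_zero hLA ha hg, rfl⟩))

theorem centralizer_eq_centralizer_range_lmul_union (hLA : (Algebra.lmul K L).range ≤ A) :
    Set.centralizer (A : Set (Module.End K L)) =
      Set.centralizer (Set.range (Algebra.lmul K L) ∪
        AlgEquiv.toLinearMap '' {g : L ≃ₐ[K] L | g.toLinearMap ∈ A}) := by
  have hsub : Set.range (Algebra.lmul K L) ∪
      AlgEquiv.toLinearMap '' {g : L ≃ₐ[K] L | g.toLinearMap ∈ A} ⊆ A :=
    Set.union_subset (fun _ h => hLA h) (Set.image_subset_iff.2 fun _ h => h)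
  refine (Set.centralizer_subset hsub).antisymm fun f hf a ha => ?_
  exact (Algebra.adjoin_le_centralizer_centralizer K _
    (le_adjoin_range_lmul_union hLA ha) f hf).symm

end IsGalois

/-- Let `L/K` be a finite Galois extension with Galois group `G` and `A` a `K`-subalgebra of
`End_K(L)` containing (the image of) `L`.  Then the centralizer of `A` in `End_K(L)` equals
(the image of) the fixed field `L^{A∩G}`, where `A∩G` is the set of automorphisms of `L`
lying in `A`. -/
theorem stmt14 (K L : Type) [Field K] [Field L] [Algebra K L] [FiniteDimensional K L]
    [IsGalois K L] (A : Subalgebra K (Module.End K L))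
    (hLA : (Algebra.lmul K L).range ≤ A) :
    ((Subalgebra.centralizer K (A : Set (Module.End K L)) :
        Subalgebra K (Module.End K L)) : Set (Module.End K L)) =
      (Algebra.lmul K L) ''
        {l : L | ∀ g : L ≃ₐ[K] L, (g.toLinearMap : Module.End K L) ∈ A → g l = l} := by
  ext f
  rw [Subalgebra.coe_centralizer, IsGalois.centralizer_eq_centralizer_range_lmul_union hLA]
  simp only [Set.mem_centralizer_iff, Set.mem_union, or_imp, forall_and, Set.forall_mem_range,
    Set.forall_mem_image]
  constructor
  · rintro ⟨hL, hG⟩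
    have hf := LinearMap.eq_lmul_of_forall_commute_lmul hL
    refine ⟨f 1, fun g hg => ?_, hf.symm⟩
    rw [hf] at hG
    exact AlgEquiv.commute_lmul_toLinearMap_iff.1 (hG hg).symm
  · rintro ⟨l, hl, rfl⟩
    exact ⟨fun y => (Commute.all y l).map (Algebra.lmul K L),
      fun g hg => (AlgEquiv.commute_lmul_toLinearMap_iff.2 (hl g hg)).symm⟩
end

section
/- Let L/K be a finite Galois extension with Galois group G. The map M ↦ L⋊Gal(L/M) is an inclusion-reversing bijection from the set of intermediate fields of L/K to the set of K-subalgebras of End_K(L) containing L, with inverse A ↦ L^{A∩G}. -/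
/-!
`L ⋊ H`, the `L`-span of `H` in `End_K L`, is closed under composition because `g ∘ a = g(a) ∘ g`,
so it is the `K`-algebra generated by `L` and `H`. By Dedekind's independence of characters the
automorphisms are `L`-linearly independent, hence `g ∈ L ⋊ H ↔ g ∈ H`, and the Galois
correspondence makes `A ↦ L^{A ∩ G}` a left inverse.

Conversely, a subalgebra `A ⊇ L` is an `L`-subspace stable under right multiplication by a
primitive element `α`. The automorphisms span `End_K L` and are eigenvectors of this operator with
the pairwise distinct eigenvalues `g α`, so its eigenspaces are the lines `L g`, and the invariant
subspace `A` is the sum of its intersections with them, i.e. `A = L ⋊ (A ∩ G)`.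
-/

open Module Submodule

theorem Submodule.inf_span_le_span_inter_of_subsingleton {K V : Type*} [DivisionRing K]
    [AddCommGroup V] [Module K V] (p : Submodule K V) {s : Set V} (hs : s.Subsingleton) :
    p ⊓ span K s ≤ span K (s ∩ p) := by
  rintro x ⟨hxp, hxs⟩
  obtain rfl | ⟨v, rfl⟩ := hs.eq_empty_or_singleton
  · simp_all
  obtain ⟨c, rfl⟩ := mem_span_singleton.mp hxs
  obtain rfl | hc := eq_or_ne c 0
  · simp
  have hv : v ∈ p := by simpa [hc] using p.smul_mem c⁻¹ hxp
  exact smul_mem _ c (subset_span ⟨rfl, hv⟩)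

variable {K L : Type*} [Field K] [Field L] [Algebra K L]

theorem Algebra.lmul_mul_eq_smul (a : L) (f : End K L) : Algebra.lmul K L a * f = a • f := rfl

theorem AlgEquiv.toLinearMap_mul_lmul (g : L ≃ₐ[K] L) (a : L) :
    (g.toLinearMap : End K L) * Algebra.lmul K L a = g a • g.toLinearMap := by
  ext x
  simp

theorem AlgEquiv.linearIndependent_toLinearMap :
    LinearIndependent L (fun g : L ≃ₐ[K] L ↦ (g.toLinearMap : End K L)) :=
  (linearIndependent_algHom_toLinearMap K L L).comp ((↑) : (L ≃ₐ[K] L) → L →ₐ[K] L)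
    AlgEquiv.coe_toAlgHom_injective

theorem AlgEquiv.toLinearMap_mem_span_image_iff {H : Set (L ≃ₐ[K] L)} {g : L ≃ₐ[K] L} :
    (g.toLinearMap : End K L) ∈ span L (AlgEquiv.toLinearMap '' H) ↔ g ∈ H :=
  ⟨fun h ↦ by_contra fun hg ↦ linearIndependent_toLinearMap.notMem_span_image hg h,
    fun hg ↦ subset_span ⟨g, hg, rfl⟩⟩

variable (K L) in
theorem AlgEquiv.span_range_toLinearMap [FiniteDimensional K L] [IsGalois K L] :
    span L (Set.range fun g : L ≃ₐ[K] L ↦ (g.toLinearMap : End K L)) = ⊤ := by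
  have := Fintype.ofFinite (L ≃ₐ[K] L)
  refine linearIndependent_toLinearMap.span_eq_top_of_card_eq_finrank' ?_
  rw [finrank_linearMap_self, ← IsGalois.card_aut_eq_finrank, Nat.card_eq_fintype_card]

def Subalgebra.toLSubmodule (A : Subalgebra K (End K L)) (hA : (Algebra.lmul K L).range ≤ A) :
    Submodule L (End K L) where
  carrier := A
  add_mem' := A.add_mem
  zero_mem' := A.zero_mem
  smul_mem' a _ hx := A.mul_mem (hA ⟨a, rfl⟩) hx

theorem mul_mem_span_toLinearMap {H : Submonoid (L ≃ₐ[K] L)} {x y : End K L}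
    (hx : x ∈ span L (AlgEquiv.toLinearMap '' (H : Set (L ≃ₐ[K] L))))
    (hy : y ∈ span L (AlgEquiv.toLinearMap '' (H : Set (L ≃ₐ[K] L)))) :
    x * y ∈ span L (AlgEquiv.toLinearMap '' (H : Set (L ≃ₐ[K] L))) := by
  induction hx using span_induction with
  | mem _ hx =>
    obtain ⟨g, hg, rfl⟩ := hx
    induction hy using span_induction with
    | mem _ hy =>
      obtain ⟨h, hh, rfl⟩ := hy
      exact subset_span ⟨g * h, H.mul_mem hg hh, rfl⟩
    | zero => simp
    | add _ _ _ _ h₁ h₂ => rw [mul_add]; exact add_mem h₁ h₂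
    | smul a y _ h =>
      rw [← Algebra.lmul_mul_eq_smul, ← mul_assoc, AlgEquiv.toLinearMap_mul_lmul, smul_mul_assoc]
      exact smul_mem _ _ h
  | zero => simp
  | add _ _ _ _ h₁ h₂ => rw [add_mul]; exact add_mem h₁ h₂
  | smul a x _ h => rw [smul_mul_assoc]; exact smul_mem _ _ h

/-- `L ⋊ H` -/
def crossedProduct (H : Subgroup (L ≃ₐ[K] L)) : Subalgebra K (End K L) :=
  ((span L (AlgEquiv.toLinearMap '' (H : Set (L ≃ₐ[K] L)))).restrictScalars K).toSubalgebra
    (subset_span ⟨1, H.one_mem, rfl⟩) fun _ _ ↦ mul_mem_span_toLinearMap (H := H.toSubmonoid)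

theorem mem_crossedProduct {H : Subgroup (L ≃ₐ[K] L)} {x : End K L} :
    x ∈ crossedProduct H ↔ x ∈ span L (AlgEquiv.toLinearMap '' (H : Set (L ≃ₐ[K] L))) :=
  Iff.rfl

theorem adjoin_eq_crossedProduct (H : Subgroup (L ≃ₐ[K] L)) :
    Algebra.adjoin K (Set.range (Algebra.lmul K L) ∪
      AlgEquiv.toLinearMap '' (H : Set (L ≃ₐ[K] L))) = crossedProduct H := by
  refine le_antisymm (Algebra.adjoin_le ?_) fun x hx ↦ ?_
  · rintro _ (⟨a, rfl⟩ | hg)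
    · rw [SetLike.mem_coe, mem_crossedProduct, ← mul_one (Algebra.lmul K L a),
        Algebra.lmul_mul_eq_smul]
      exact smul_mem _ a (subset_span ⟨1, H.one_mem, rfl⟩)
    · exact subset_span hg
  · let B := Algebra.adjoin K (Set.range (Algebra.lmul K L) ∪
      AlgEquiv.toLinearMap '' (H : Set (L ≃ₐ[K] L)))
    have hB : span L (AlgEquiv.toLinearMap '' (H : Set (L ≃ₐ[K] L))) ≤
        B.toLSubmodule fun _ ha ↦ Algebra.subset_adjoin (Or.inl ha) :=
      span_le.mpr fun _ hg ↦ Algebra.subset_adjoin (Or.inr hg)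
    exact hB hx

/-- `A ∩ G` -/
def autSubgroup [Finite (L ≃ₐ[K] L)] (A : Subalgebra K (End K L)) : Subgroup (L ≃ₐ[K] L) where
  toSubmonoid := A.toSubmonoid.comap (AlgEquiv.toLinearMapHom K L)
  inv_mem' {g} hg :=
    Submonoid.powers_le.mpr hg (mem_powers_iff_mem_zpowers.mpr (inv_mem (Subgroup.mem_zpowers g)))

variable (K) in
abbrev rightMul (a : L) : End L (End K L) := LinearMap.lcomp L L (Algebra.lmul K L a)

theorem AlgEquiv.toLinearMap_mem_eigenspace_rightMul (g : L ≃ₐ[K] L) (a : L) :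
    (g.toLinearMap : End K L) ∈ (rightMul K a).eigenspace (g a) :=
  End.mem_eigenspace_iff.mpr (g.toLinearMap_mul_lmul a)

section Galois

variable [FiniteDimensional K L] [IsGalois K L]

theorem iSup_span_toLinearMap_fiber (a : L) :
    ⨆ μ, span L (AlgEquiv.toLinearMap '' {g : L ≃ₐ[K] L | g a = μ}) = ⊤ := by
  rw [← span_iUnion, ← AlgEquiv.span_range_toLinearMap K L]
  congr 1
  ext
  simp

theorem eigenspace_rightMul (a μ : L) :
    (rightMul K a).eigenspace μ = span L (AlgEquiv.toLinearMap '' {g : L ≃ₐ[K] L | g a = μ}) := by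
  have hle : (fun μ ↦ span L (AlgEquiv.toLinearMap '' {g : L ≃ₐ[K] L | g a = μ})) ≤
      fun μ ↦ (rightMul K a).eigenspace μ := by
    intro μ
    rw [span_le]
    rintro _ ⟨g, rfl, rfl⟩
    exact g.toLinearMap_mem_eigenspace_rightMul a
  exact (congrFun (((End.eigenspaces_iSupIndep _).le_iff_eq_of_iSup_eq_top
    (iSup_span_toLinearMap_fiber a)).mp hle) μ).symm

theorem span_toLinearMap_mem_eq (p : Submodule L (End K L))
    (hp : ∀ x ∈ p, ∀ a : L, x * Algebra.lmul K L a ∈ p) :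
    span L (AlgEquiv.toLinearMap '' {g : L ≃ₐ[K] L | (g.toLinearMap : End K L) ∈ p}) = p := by
  refine le_antisymm (span_le.mpr (Set.image_subset_iff.mpr fun _ ↦ id)) ?_
  let pb := Field.powerBasisOfFiniteOfSeparable K L
  have hT : ∀ x ∈ p, rightMul K pb.gen x ∈ p := fun x hx ↦ hp x hx pb.gen
  have htop : ⨆ μ, (rightMul K pb.gen).eigenspace μ = ⊤ := by
    simp_rw [eigenspace_rightMul]
    exact iSup_span_toLinearMap_fiber pb.gen
  have hinj : ∀ μ, {g : L ≃ₐ[K] L | g pb.gen = μ}.Subsingleton := by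
    rintro μ g (hg : g pb.gen = μ) h (hh : h pb.gen = μ)
    exact AlgEquiv.coe_toAlgHom_injective (pb.algHom_ext (hg.trans hh.symm))
  calc p = ⨆ μ, p ⊓ (rightMul K pb.gen).eigenspace μ := eq_iSup_inf_genEigenspace 1 hT htop
    _ ≤ _ := iSup_le fun μ ↦ by
      rw [eigenspace_rightMul]
      refine (p.inf_span_le_span_inter_of_subsingleton ((hinj μ).image _)).trans (span_mono ?_)
      rintro _ ⟨⟨g, -, rfl⟩, hg⟩
      exact ⟨g, hg, rfl⟩

theorem crossedProduct_autSubgroup (A : Subalgebra K (End K L))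
    (hA : (Algebra.lmul K L).range ≤ A) : crossedProduct (autSubgroup A) = A :=
  SetLike.ext fun x ↦ SetLike.ext_iff.mp
    (span_toLinearMap_mem_eq (A.toLSubmodule hA) fun _ hx a ↦ A.mul_mem hx (hA ⟨a, rfl⟩)) x

end Galois

/-- Let `L/K` be a finite Galois extension with Galois group `G`.  The map
`M ↦ L⋊Gal(L/M)` is an inclusion-reversing bijection from intermediate fields of `L/K`
onto the `K`-subalgebras of `End_K(L)` containing (the image of) `L`, with inverse
`A ↦ L^{A∩G}`. -/
theorem stmt15 (K L : Type) [Field K] [Field L] [Algebra K L] [FiniteDimensional K L]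
    [IsGalois K L] :
    letI F : IntermediateField K L → Subalgebra K (Module.End K L) := fun M =>
      Algebra.adjoin K (Set.range (Algebra.lmul K L) ∪
        (fun g : L ≃ₐ[K] L => (g.toLinearMap : Module.End K L)) ''
          (M.fixingSubgroup : Set (L ≃ₐ[K] L)))
    -- the map lands in subalgebras containing `L`
    (∀ M : IntermediateField K L, (Algebra.lmul K L).range ≤ F M) ∧
    -- `A ↦ L^{A∩G}` is a left inverse
    (∀ M : IntermediateField K L,
        {l : L | ∀ g : L ≃ₐ[K] L, (g.toLinearMap : Module.End K L) ∈ F M → g l = l} =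
          (M : Set L)) ∧
    -- surjectivity onto the subalgebras containing `L`
    (∀ A : Subalgebra K (Module.End K L), (Algebra.lmul K L).range ≤ A →
        ∃ M : IntermediateField K L, F M = A) ∧
    -- the bijection is inclusion-reversing
    (∀ M M' : IntermediateField K L, M ≤ M' → F M' ≤ F M) := by
  refine ⟨fun M ↦ ?_, fun M ↦ ?_, fun A hA ↦ ?_, fun M M' h ↦ ?_⟩
  · rintro _ ⟨a, rfl⟩
    exact Algebra.subset_adjoin (Or.inl ⟨a, rfl⟩)
  · ext l
    simp only [adjoin_eq_crossedProduct, mem_crossedProduct,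
      AlgEquiv.toLinearMap_mem_span_image_iff, Set.mem_ofPred_eq, SetLike.mem_coe]
    rw [← IntermediateField.mem_fixedField_iff, IsGalois.fixedField_fixingSubgroup]
  · refine ⟨IntermediateField.fixedField (autSubgroup A), ?_⟩
    simp only [adjoin_eq_crossedProduct]
    rw [IntermediateField.fixingSubgroup_fixedField, crossedProduct_autSubgroup A hA]
  · exact Algebra.adjoin_mono (Set.union_subset_union_right _
      (Set.image_mono (IntermediateField.fixingSubgroup_antitone h)))
end
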